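/- For any planar tanglegram (T,S,φ), the flip graph Γ(T,S,φ) is connected. -/

import Mathlib

/-!
# Tanglegrams

A rooted binary tree is modelled by the inductive type `BTree`, whose leaves carry
natural-number labels.  Vertices of a tree are identified with the sets of labels of
their leaf descendants (their *clades*): since all leaf labels of the trees occurring
in a tanglegram are distinct, this identification is injective.

A tanglegram of size `n` consists of two rooted binary trees whose leaves are labelled
bijectively by `{0, …, n-1}` together with a permutation `φ` matching leaf `t i` of
the first tree with leaf `s (φ i)` of the second tree.

A layout is recorded by the pair of lists of leaf labels of the two trees, read from
top to bottom; the defining property is that the leaf set of every vertex occupies a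
consecutive block.
-/

/-- A rooted binary tree with leaves labelled by natural numbers. -/
inductive BTree : Type
  | leaf : ℕ → BTree
  | node : BTree → BTree → BTree

namespace BTree

/-- The list of leaf labels of a tree, from left to right. -/
def leafList : BTree → List ℕ
  | .leaf i => [i]
  | .node l r => l.leafList ++ r.leafList

/-- The set of leaf labels of a tree. -/
def leaves (t : BTree) : Finset ℕ := t.leafList.toFinset

/-- `t.Clade s` : `s` is the set of labels of the leaf descendants of some vertex
of `t`. -/
def Clade : BTree → Finset ℕ → Prop
  | .leaf i, s => s = {i}
  | .node l r, s => s = (BTree.node l r).leaves ∨ l.Clade s ∨ r.Clade s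

/-- `t.InternalClade s` : `s` is the set of labels of the leaf descendants of some
*internal* vertex of `t`. -/
def InternalClade : BTree → Finset ℕ → Prop
  | .leaf _, _ => False
  | .node l r, s => s = (BTree.node l r).leaves ∨ l.InternalClade s ∨ r.InternalClade s

/-- `t.NodeClades c c₁ c₂` : some internal vertex of `t` has leaf-label set `c`, and
its two children have leaf-label sets `c₁` and `c₂` (in left-right order). -/
def NodeClades : BTree → Finset ℕ → Finset ℕ → Finset ℕ → Prop
  | .leaf _, _, _, _ => False
  | .node l r, c, c₁, c₂ =>
      (c = (BTree.node l r).leaves ∧ c₁ = l.leaves ∧ c₂ = r.leaves) ∨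
      l.NodeClades c c₁ c₂ ∨ r.NodeClades c c₁ c₂

end BTree

/-- A tanglegram of size `n` : two rooted binary trees `T` and `S` whose leaves are
labelled bijectively by `{0, …, n-1}`, together with a permutation `φ` matching the
leaf of `T` labelled `i` with the leaf of `S` labelled `φ i`.  (The permutation is
normalised to be the identity off `{0, …, n-1}`.) -/
structure Tanglegram (n : ℕ) where
  T : BTree
  S : BTree
  φ : Equiv.Perm ℕ
  hT : T.leafList.Nodup ∧ ∀ i, i ∈ T.leafList ↔ i < n
  hS : S.leafList.Nodup ∧ ∀ i, i ∈ S.leafList ↔ i < n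
  hφ : ∀ i, n ≤ i → φ i = i

/-- The elements of the finite set `s` occur as a consecutive block of the list `X`. -/
def ConsecIn (X : List ℕ) (s : Finset ℕ) : Prop :=
  ∃ l m r : List ℕ, X = l ++ m ++ r ∧ ∀ a, a ∈ m ↔ a ∈ s

/-- `(X, Y)` is a layout of the tanglegram `G` : `X` is an ordering of the leaf labels
of `T`, `Y` one of the leaf labels of `S`, and the leaf set of every vertex of either
tree forms a consecutive block. -/
def IsLayout {n : ℕ} (G : Tanglegram n) (X Y : List ℕ) : Prop :=
  X.Perm G.T.leafList ∧ Y.Perm G.S.leafList ∧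
    (∀ s, G.T.Clade s → ConsecIn X s) ∧ (∀ s, G.S.Clade s → ConsecIn Y s)

/-- The between-tree edges `e i` and `e j` cross in the layout `(X, Y)` :
`t i` precedes `t j` in `X` while `s (φ j)` precedes `s (φ i)` in `Y`. -/
def Crossing {n : ℕ} (G : Tanglegram n) (X Y : List ℕ) (i j : ℕ) : Prop :=
  i < n ∧ j < n ∧ X.idxOf i < X.idxOf j ∧ Y.idxOf (G.φ j) < Y.idxOf (G.φ i)

/-- The number of crossings of the layout `(X, Y)` (each crossing pair of between-tree
edges is counted once, ordered by position in `X`). -/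
def crossCount {n : ℕ} (G : Tanglegram n) (X Y : List ℕ) : ℕ :=
  ((Finset.range n ×ˢ Finset.range n).filter fun p =>
    X.idxOf p.1 < X.idxOf p.2 ∧ Y.idxOf (G.φ p.2) < Y.idxOf (G.φ p.1)).card

/-- A planar layout is a layout with no crossings. -/
def IsPlanarLayout {n : ℕ} (G : Tanglegram n) (X Y : List ℕ) : Prop :=
  IsLayout G X Y ∧ ∀ i j, ¬ Crossing G X Y i j

/-- A tanglegram is planar if it admits a planar layout. -/
def IsPlanarTanglegram {n : ℕ} (G : Tanglegram n) : Prop :=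
  ∃ X Y, IsPlanarLayout G X Y

/-- The crossing number: the minimum number of crossings over all layouts. -/
noncomputable def crt {n : ℕ} (G : Tanglegram n) : ℕ :=
  sInf {c | ∃ X Y, IsLayout G X Y ∧ crossCount G X Y = c}

/-- `(cu, cv)` is a leaf-matched pair of `G` (a pair of internal vertices, recorded by
their leaf-label sets, such that `φ` matches the leaves below the first exactly with
the leaves below the second). -/
def LeafMatchedPair {n : ℕ} (G : Tanglegram n) (cu cv : Finset ℕ) : Prop :=
  G.T.InternalClade cu ∧ G.S.InternalClade cv ∧ cv = cu.image G.φ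

/-- A tanglegram (of size at least 2) is irreducible if its only leaf-matched pair is
the pair of roots. -/
def IrreducibleTanglegram {n : ℕ} (G : Tanglegram n) : Prop :=
  2 ≤ n ∧ ∀ cu cv, LeafMatchedPair G cu cv →
    cu = Finset.range n ∧ cv = Finset.range n

/-- `X'` is obtained from `X` by reversing the consecutive block consisting of the
elements of `s` : the effect on a layout of a flip at the vertex with leaf set `s`. -/
def FlipBlock (s : Finset ℕ) (X X' : List ℕ) : Prop :=
  ∃ l m r : List ℕ, X = l ++ m ++ r ∧ (∀ a, a ∈ m ↔ a ∈ s) ∧ X' = l ++ m.reverse ++ r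

/-- `X'` is obtained from `X` by interchanging the adjacent blocks consisting of the
elements of `s₁` and of `s₂` (occurring in this order), keeping the relative order of
the elements within each block. -/
def SwitchBlock (s₁ s₂ : Finset ℕ) (X X' : List ℕ) : Prop :=
  ∃ l m₁ m₂ r : List ℕ, X = l ++ m₁ ++ m₂ ++ r ∧ (∀ a, a ∈ m₁ ↔ a ∈ s₁) ∧
    (∀ a, a ∈ m₂ ↔ a ∈ s₂) ∧ X' = l ++ m₂ ++ m₁ ++ r

/-- The effect of a subtree switch at an internal vertex whose children have leaf sets
`c₁` and `c₂` (in either order in the layout). -/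
def SwitchAt (c₁ c₂ : Finset ℕ) (X X' : List ℕ) : Prop :=
  SwitchBlock c₁ c₂ X X' ∨ SwitchBlock c₂ c₁ X X'

/-- One paired flip at a leaf-matched pair of `G`, acting on layouts. -/
def PairedFlipStep {n : ℕ} (G : Tanglegram n) (p q : List ℕ × List ℕ) : Prop :=
  ∃ cu cv, LeafMatchedPair G cu cv ∧ FlipBlock cu p.1 q.1 ∧ FlipBlock cv p.2 q.2

/-! ## Induced subtanglegrams

For `I ⊆ {0, …, n-1}`, the induced subtanglegram `(T_I, S_{φ(I)}, φ|_I)` is obtained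
by keeping only the leaves indexed by `I` (resp. `φ(I)`) and suppressing vertices with
a single remaining child.  Its vertices are identified with the vertices of `T`, `S`
that survive, and the clades of `T_I` are exactly the nonempty sets `c ∩ I` for `c` a
clade of `T`. -/

/-- `(A, B)` is a layout of the subtanglegram of `G` induced by `I` : `A` orders the
leaf labels in `I`, `B` those in `φ(I)`, and every clade of the induced subtrees is
consecutive. -/
def IsSubLayout {n : ℕ} (G : Tanglegram n) (I : Finset ℕ) (A B : List ℕ) : Prop :=
  A.Nodup ∧ (∀ a, a ∈ A ↔ a ∈ I) ∧ B.Nodup ∧ (∀ b, b ∈ B ↔ b ∈ I.image G.φ) ∧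
    (∀ c, G.T.Clade c → ConsecIn A (c ∩ I)) ∧
    (∀ c, G.S.Clade c → ConsecIn B (c ∩ I.image G.φ))

/-- A planar layout of the subtanglegram induced by `I` : a layout in which no two of
the between-tree edges indexed by `I` cross. -/
def IsPlanarSubLayout {n : ℕ} (G : Tanglegram n) (I : Finset ℕ) (A B : List ℕ) : Prop :=
  IsSubLayout G I A B ∧ ∀ i ∈ I, ∀ j ∈ I,
    ¬ (A.idxOf i < A.idxOf j ∧ B.idxOf (G.φ j) < B.idxOf (G.φ i))

/-- The subtanglegram of `G` induced by `I` is planar. -/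
def SubPlanar {n : ℕ} (G : Tanglegram n) (I : Finset ℕ) : Prop :=
  ∃ A B, IsPlanarSubLayout G I A B

/-- The layout `(X, Y)` of `G` restricts (deleting the leaves not indexed by `I`,
resp. `φ(I)`) to a planar layout of the subtanglegram induced by `I`. -/
def RestrictsToPlanarSub {n : ℕ} (G : Tanglegram n) (I : Finset ℕ) (X Y : List ℕ) :
    Prop :=
  IsPlanarSubLayout G I (X.filter fun a => decide (a ∈ I))
    (Y.filter fun b => decide (b ∈ I.image G.φ))

/-- The vertex of the tree `t` with leaf set `c` is an internal vertex of the subtree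
induced by `I` : both of its children have leaf descendants indexed by `I` (so it is
neither suppressed nor outside the minimal subtree). -/
def SurvivesInternal (t : BTree) (I : Finset ℕ) (c : Finset ℕ) : Prop :=
  ∃ c₁ c₂, t.NodeClades c c₁ c₂ ∧ (c₁ ∩ I).Nonempty ∧ (c₂ ∩ I).Nonempty

/-- `(cu, cv)` is a member of `L(I)`, the set of leaf-matched pairs of the
subtanglegram induced by `I` : the pair is recorded by the full leaf sets in `T`, `S`
of the two vertices, which are internal vertices of the induced subtrees whose leaf
sets within the subtanglegram are matched by `φ`. -/
def MemLI {n : ℕ} (G : Tanglegram n) (I : Finset ℕ) (cu cv : Finset ℕ) : Prop :=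
  SurvivesInternal G.T I cu ∧ SurvivesInternal G.S (I.image G.φ) cv ∧
    (cu ∩ I).image G.φ = cv ∩ I.image G.φ

/-- The flip graph of a planar tanglegram: vertices are the planar layouts, with an
edge between two planar layouts whenever one is obtained from the other by a paired
flip at some leaf-matched pair. -/
def flipGraph {n : ℕ} (G : Tanglegram n) :
    SimpleGraph {p : List ℕ × List ℕ // IsPlanarLayout G p.1 p.2} where
  Adj p q := p ≠ q ∧ (PairedFlipStep G p.1 q.1 ∨ PairedFlipStep G q.1 p.1)
  symm := by
    constructor
    intro p q h
    exact ⟨fun e => h.1 e.symm, h.2.elim Or.inr Or.inl⟩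
  loopless := by
    constructor
    intro p h
    exact h.1 rfl

namespace TGaux

/-- prefix block -/
def PB (X : List ℕ) (s : Finset ℕ) : Prop :=
  ∃ m r : List ℕ, X = m ++ r ∧ ∀ a, a ∈ m ↔ a ∈ s

lemma nodup_parts {l m r : List ℕ} (h : (l ++ m ++ r).Nodup) :
    (∀ a ∈ l, a ∉ m) ∧ (∀ a ∈ l, a ∉ r) ∧ (∀ a ∈ m, a ∉ r) := by
  rw [List.append_assoc, List.nodup_append] at h
  obtain ⟨hl, hmr, hdis⟩ := h
  rw [List.nodup_append] at hmr
  obtain ⟨hm, hr, hmr'⟩ := hmr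
  exact ⟨fun a ha hm' => hdis a ha a (by simp [hm']) rfl, fun a ha hr' => hdis a ha a (by simp [hr']) rfl,
    fun a hm' hr' => hmr' a hm' a hr' rfl⟩

lemma heads_eq {q r w v : List ℕ} (h : q ++ r = w ++ v) (hq : q ≠ []) (hw : w ≠ []) :
    q.head hq = w.head hw := by
  obtain ⟨a, q', rfl⟩ := List.exists_cons_of_ne_nil hq
  obtain ⟨b, w', rfl⟩ := List.exists_cons_of_ne_nil hw
  simpa using congrArg (fun t => List.head? t) h

lemma pref_aux {X l m r u w v : List ℕ} (hX : X.Nodup) (h1 : X = l ++ m ++ r)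
    (h2 : X = u ++ w ++ v) (hw : w ≠ []) (hsub : ∀ a ∈ w, a ∈ m) : l <+: u := by
  have hpl : l <+: X := ⟨m ++ r, by simp [h1]⟩
  have hpu : u <+: X := ⟨w ++ v, by simp [h2]⟩
  rcases List.prefix_or_prefix_of_prefix hpu hpl with h | h
  · -- u <+: l ; show they are equal
    obtain ⟨t, rfl⟩ := h
    rcases eq_or_ne t [] with rfl | ht
    · exact ⟨[], by simp⟩
    · exfalso
      have heq : t ++ m ++ r = w ++ v := by
        have := h1.symm.trans h2
        simpa [List.append_assoc] using this
      have hh : t.head ht = w.head hw := heads_eq (by simpa [List.append_assoc] using heq) ht hw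
      have hmem1 : t.head ht ∈ u ++ t := by
        apply List.mem_append_right; exact List.head_mem ht
      have hmem2 : t.head ht ∈ m := by
        rw [hh]; exact hsub _ (List.head_mem hw)
      have := (nodup_parts (h1 ▸ hX)).1 _ hmem1 hmem2
      exact this
  · exact h

lemma suf_aux {X l m r u w v : List ℕ} (hX : X.Nodup) (h1 : X = l ++ m ++ r)
    (h2 : X = u ++ w ++ v) (hw : w ≠ []) (hsub : ∀ a ∈ w, a ∈ m) : r <:+ v := by
  have h1' : X.reverse = r.reverse ++ m.reverse ++ l.reverse := by
    rw [h1]; simp [List.reverse_append, List.append_assoc]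
  have h2' : X.reverse = v.reverse ++ w.reverse ++ u.reverse := by
    rw [h2]; simp [List.reverse_append, List.append_assoc]
  have := pref_aux (X := X.reverse) (List.nodup_reverse.mpr hX) h1' h2' (by simpa using hw)
    (by intro a ha; simp only [List.mem_reverse] at ha ⊢; exact hsub a ha)
  exact List.reverse_prefix.mp this

lemma nest {X l m r u w v : List ℕ} (hX : X.Nodup) (h1 : X = l ++ m ++ r)
    (h2 : X = u ++ w ++ v) (hw : w ≠ []) (hsub : ∀ a ∈ w, a ∈ m) :
    ∃ m₁ m₂, m = m₁ ++ w ++ m₂ ∧ u = l ++ m₁ ∧ v = m₂ ++ r := by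
  obtain ⟨m₁, hu⟩ := pref_aux hX h1 h2 hw hsub
  obtain ⟨m₂, hv⟩ := suf_aux hX h1 h2 hw hsub
  refine ⟨m₁, m₂, ?_, hu.symm, hv.symm⟩
  have h3 : l ++ (m ++ r) = l ++ ((m₁ ++ w ++ m₂) ++ r) := by
    have : l ++ m ++ r = l ++ m₁ ++ (w ++ (m₂ ++ r)) := by
      rw [← h1, h2, ← hu, ← hv]; simp [List.append_assoc]
    simpa [List.append_assoc] using this
  exact List.append_cancel_right (List.append_cancel_left h3)

lemma block_unique {X l₁ m₁ r₁ l₂ m₂ r₂ : List ℕ} {s : Finset ℕ} (hX : X.Nodup)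
    (h1 : X = l₁ ++ m₁ ++ r₁) (e1 : ∀ a, a ∈ m₁ ↔ a ∈ s)
    (h2 : X = l₂ ++ m₂ ++ r₂) (e2 : ∀ a, a ∈ m₂ ↔ a ∈ s) (hs : s.Nonempty) :
    l₁ = l₂ ∧ m₁ = m₂ ∧ r₁ = r₂ := by
  obtain ⟨x, hx⟩ := hs
  have hm2 : m₂ ≠ [] := by intro h; rw [h] at e2; simpa using (e2 x).2 hx
  obtain ⟨a, b, hm, hl, hr⟩ := nest hX h1 h2 hm2 (fun t ht => (e1 t).2 ((e2 t).1 ht))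
  have hnd := nodup_parts (h2 ▸ hX)
  have ha : a = [] := by
    rcases eq_or_ne a [] with h | h; · exact h
    exfalso
    have h1' : a.head h ∈ m₂ := (e2 _).2 ((e1 _).1 (by rw [hm]; simp [List.head_mem h]))
    have h2' : a.head h ∈ l₂ := by rw [hl]; exact List.mem_append_right _ (List.head_mem h)
    exact hnd.1 _ h2' h1'
  have hb : b = [] := by
    rcases eq_or_ne b [] with h | h; · exact h
    exfalso
    have h1' : b.head h ∈ m₂ := (e2 _).2 ((e1 _).1 (by rw [hm]; simp [List.head_mem h]))
    have h2' : b.head h ∈ r₂ := by rw [hr]; exact List.mem_append_left _ (List.head_mem h)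
    exact hnd.2.2 _ h1' h2'
  subst ha hb
  simp only [List.nil_append, List.append_nil] at hm hl hr
  exact ⟨hl.symm, hm, hr.symm⟩

lemma flipBlock_eq {s : Finset ℕ} {X X₁ X₂ : List ℕ} (hX : X.Nodup) (hs : s.Nonempty)
    (h1 : FlipBlock s X X₁) (h2 : FlipBlock s X X₂) : X₁ = X₂ := by
  obtain ⟨l, m, r, hd, hm, rfl⟩ := h1
  obtain ⟨l', m', r', hd', hm', rfl⟩ := h2
  obtain ⟨hl, hmm, hr⟩ := block_unique hX hd hm hd' hm' hs
  rw [hl, hmm, hr]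

lemma flipBlock_symm {s : Finset ℕ} {X X' : List ℕ} (h : FlipBlock s X X') :
    FlipBlock s X' X := by
  obtain ⟨l, m, r, hd, hm, rfl⟩ := h
  exact ⟨l, m.reverse, r, rfl, fun a => by simpa using hm a, by simp [hd]⟩

lemma consecIn_univ {X : List ℕ} {s : Finset ℕ} (h : ∀ a, a ∈ X ↔ a ∈ s) : ConsecIn X s :=
  ⟨[], X, [], by simp, h⟩

lemma consecIn_singleton {X : List ℕ} {x : ℕ} (h : x ∈ X) : ConsecIn X {x} := by
  obtain ⟨s, t, rfl⟩ := List.append_of_mem h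
  exact ⟨s, [x], t, by simp, by simp⟩

lemma consecIn_reverse {X : List ℕ} {s : Finset ℕ} (h : ConsecIn X s) :
    ConsecIn X.reverse s := by
  obtain ⟨l, m, r, rfl, hm⟩ := h
  exact ⟨r.reverse, m.reverse, l.reverse, by simp [List.reverse_append, List.append_assoc],
    fun a => by simpa using hm a⟩

lemma consecIn_middle {l m r : List ℕ} {s : Finset ℕ} (h : ConsecIn m s) :
    ConsecIn (l ++ m ++ r) s := by
  obtain ⟨u, w, v, rfl, hw⟩ := h
  exact ⟨l ++ u, w, v ++ r, by simp [List.append_assoc], hw⟩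

lemma consecIn_restrict {l m r : List ℕ} {s : Finset ℕ} (hX : (l ++ m ++ r).Nodup)
    (h : ConsecIn (l ++ m ++ r) s) (hsub : ∀ a ∈ s, a ∈ m) : ConsecIn m s := by
  rcases s.eq_empty_or_nonempty with rfl | hs
  · exact ⟨m, [], [], by simp, by simp⟩
  · obtain ⟨u, w, v, hd, hw⟩ := h
    obtain ⟨x, hx⟩ := hs
    have hwne : w ≠ [] := by intro h; rw [h] at hw; simpa using (hw x).2 hx
    obtain ⟨m₁, m₂, hm, _, _⟩ := nest hX rfl hd hwne (fun t ht => hsub t ((hw t).1 ht))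
    exact ⟨m₁, w, m₂, hm, hw⟩


lemma head_mem_left {l rest : List ℕ} (hl : l ≠ []) (hne : l ++ rest ≠ []) :
    (l ++ rest).head hne ∈ l := by
  rw [List.head_append_of_ne_nil hl]; exact List.head_mem hl

lemma consecIn_flip {X l m r : List ℕ} {c d : Finset ℕ} (hX : X.Nodup)
    (h1 : X = l ++ m ++ r) (hm : ∀ a, a ∈ m ↔ a ∈ c) (hd : ConsecIn X d)
    (hcd : (∀ a ∈ d, a ∈ c) ∨ (∀ a ∈ c, a ∈ d) ∨ (∀ a ∈ d, a ∉ c))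
    (hc : c.Nonempty) : ConsecIn (l ++ m.reverse ++ r) d := by
  have hmne : m ≠ [] := by
    obtain ⟨x, hx⟩ := hc
    intro h; rw [h] at hm; simpa using (hm x).2 hx
  rcases hcd with hsub | hsup | hdisj
  · -- d ⊆ c : restrict to m, reverse inside
    have : ConsecIn m d := consecIn_restrict (h1 ▸ hX) (h1 ▸ hd)
      (fun a ha => (hm a).2 (hsub a ha))
    exact consecIn_middle (consecIn_reverse this)
  · -- c ⊆ d
    obtain ⟨u, w, v, hd2, hw⟩ := hd
    obtain ⟨w₁, w₂, hweq, hleq, hreq⟩ := nest hX hd2 h1 hmne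
      (fun t ht => (hw t).2 (hsup t ((hm t).1 ht)))
    refine ⟨u, w₁ ++ m.reverse ++ w₂, v, ?_, ?_⟩
    · rw [hleq, hreq]; simp [List.append_assoc]
    · intro a
      rw [← hw a, hweq]; simp only [List.mem_append, List.mem_reverse]
  · -- d disjoint from c
    obtain ⟨u, w, v, hd2, hw⟩ := hd
    rcases Finset.eq_empty_or_nonempty d with rfl | hdne
    · exact ⟨[], [], l ++ m.reverse ++ r, by simp, by simp⟩
    have hwne : w ≠ [] := by
      obtain ⟨x, hx⟩ := hdne
      intro h; rw [h] at hw; simpa using (hw x).2 hx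
    have hwc : ∀ a ∈ w, a ∉ m := fun a ha ham => hdisj a ((hw a).1 ha) ((hm a).1 ham)
    have hpl : l <+: X := ⟨m ++ r, by simp [h1]⟩
    have hpu : u <+: X := ⟨w ++ v, by simp [hd2]⟩
    rcases List.prefix_or_prefix_of_prefix hpl hpu with h | h
    · -- l <+: u : the block w lies in r (or exactly after m)
      obtain ⟨t, rfl⟩ := h
      have heq : m ++ r = t ++ (w ++ v) := by
        have := h1.symm.trans hd2
        simp only [List.append_assoc] at this
        exact List.append_cancel_left this
      have hpm : m <+: m ++ r := ⟨r, rfl⟩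
      have hpt : t <+: m ++ r := ⟨w ++ v, heq.symm⟩
      rcases List.prefix_or_prefix_of_prefix hpm hpt with h' | h'
      · obtain ⟨t₂, ht2⟩ := h'
        have hr : r = t₂ ++ (w ++ v) := by
          have := heq
          rw [← ht2] at this
          simp only [List.append_assoc] at this
          exact List.append_cancel_left this
        exact ⟨l ++ m.reverse ++ t₂, w, v, by rw [hr]; simp [List.append_assoc], hw⟩
      · obtain ⟨q, hq2⟩ := h'
        rcases eq_or_ne q [] with rfl | hq
        · have hm2 : m = t := by simpa using hq2.symm
          subst hm2
          have hr : r = w ++ v := List.append_cancel_left heq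
          exact ⟨l ++ m.reverse, w, v, by rw [hr]; simp [List.append_assoc], hw⟩
        · exfalso
          have h2 : q ++ r = w ++ v := by
            have := heq
            rw [← hq2] at this
            simp only [List.append_assoc] at this
            exact List.append_cancel_left this
          have hh := heads_eq h2 hq hwne
          refine hwc _ (List.head_mem hwne) ?_
          rw [← hh, ← hq2]
          exact List.mem_append_right _ (List.head_mem hq)
    · -- u <+: l : w inside l (or exactly at boundary)
      obtain ⟨t, rfl⟩ := h
      have heq : w ++ v = t ++ (m ++ r) := by
        have := hd2.symm.trans h1
        simp only [List.append_assoc] at this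
        exact List.append_cancel_left this
      have hpw : w <+: w ++ v := ⟨v, rfl⟩
      have hpt : t <+: w ++ v := ⟨m ++ r, heq.symm⟩
      rcases List.prefix_or_prefix_of_prefix hpw hpt with h' | h'
      · obtain ⟨t₂, ht2⟩ := h'
        exact ⟨u, w, t₂ ++ m.reverse ++ r, by rw [← ht2]; simp [List.append_assoc], hw⟩
      · obtain ⟨q, hq2⟩ := h'
        rcases eq_or_ne q [] with rfl | hq
        · have hw2 : w = t := by simpa using hq2.symm
          subst hw2
          exact ⟨u, w, m.reverse ++ r, by simp [List.append_assoc], hw⟩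
        · exfalso
          have h2 : q ++ v = m ++ r := by
            have := heq
            rw [← hq2] at this
            simp only [List.append_assoc] at this
            exact List.append_cancel_left this
          have hh := heads_eq h2 hq hmne
          refine hwc (q.head hq) ?_ ?_
          · rw [← hq2]; exact List.mem_append_right _ (List.head_mem hq)
          · rw [hh]; exact List.head_mem hmne

lemma pb_subset_total {X : List ℕ} {s t : Finset ℕ} (h1 : PB X s) (h2 : PB X t) :
    (∀ a ∈ s, a ∈ t) ∨ (∀ a ∈ t, a ∈ s) := by
  obtain ⟨m1, r1, hd1, hm1⟩ := h1
  obtain ⟨m2, r2, hd2, hm2⟩ := h2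
  have hp1 : m1 <+: X := ⟨r1, hd1.symm⟩
  have hp2 : m2 <+: X := ⟨r2, hd2.symm⟩
  rcases List.prefix_or_prefix_of_prefix hp1 hp2 with h | h
  · exact Or.inl (fun a ha => (hm2 a).1 (h.subset ((hm1 a).2 ha)))
  · exact Or.inr (fun a ha => (hm1 a).1 (h.subset ((hm2 a).2 ha)))

lemma pb_head {X : List ℕ} {s : Finset ℕ} (h : PB X s) (hs : s.Nonempty) (hne : X ≠ []) :
    X.head hne ∈ s := by
  obtain ⟨m, r, rfl, hm⟩ := h
  obtain ⟨x, hx⟩ := hs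
  have hmne : m ≠ [] := by intro h; rw [h] at hm; simpa using (hm x).2 hx
  have : (m ++ r).head hne = m.head hmne := List.head_append_of_ne_nil _
  rw [this]
  exact (hm _).1 (List.head_mem hmne)

lemma pb_of_head {X : List ℕ} {s : Finset ℕ} (hX : X.Nodup) (h : ConsecIn X s)
    (hne : X ≠ []) (hh : X.head hne ∈ s) : PB X s := by
  obtain ⟨l, m, r, hd, hm⟩ := h
  subst hd
  rcases eq_or_ne l [] with rfl | hl
  · exact ⟨m, r, by simp, hm⟩
  · exfalso
    have h1 : (l ++ m ++ r).head hne ∈ l := by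
      have : (l ++ (m ++ r)).head (by simp [hl]) ∈ l := head_mem_left hl _
      simpa [List.append_assoc] using this
    have h2 : (l ++ m ++ r).head hne ∈ m := (hm _).2 hh
    exact (nodup_parts hX).1 _ h1 h2

lemma pb_singleton_head {X : List ℕ} {w : ℕ} (h : PB X {w}) (hne : X ≠ []) :
    X.head hne = w := by
  have := pb_head h (by simp) hne
  simpa using this

lemma pb_compl {X : List ℕ} {s V : Finset ℕ} (hX : X.Nodup) (hmem : ∀ a, a ∈ X ↔ a ∈ V)
    (h : PB X s) : PB X.reverse (V \ s) := by
  obtain ⟨m, r, rfl, hm⟩ := h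
  refine ⟨r.reverse, m.reverse, by simp, fun a => ?_⟩
  simp only [List.mem_reverse, Finset.mem_sdiff]
  constructor
  · intro ha
    refine ⟨(hmem a).1 (List.mem_append_right _ ha), fun hs => ?_⟩
    exact (nodup_parts (l := m) (r := []) (by simpa using hX)).1 _ ((hm a).2 hs) (by simpa using ha)
  · rintro ⟨hV, hs⟩
    rcases List.mem_append.1 ((hmem a).2 hV) with h | h
    · exact absurd ((hm a).1 h) hs
    · exact h

lemma pb_mem {X : List ℕ} {s : Finset ℕ} (h : PB X s) {a : ℕ} (ha : a ∈ s) : a ∈ X := by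
  obtain ⟨m, r, rfl, hm⟩ := h
  exact List.mem_append_left _ ((hm a).2 ha)

lemma front_child {X : List ℕ} {h c₁ c₂ : Finset ℕ} (hX : X.Nodup) (hh : PB X h)
    (h1 : ConsecIn X c₁) (h2 : ConsecIn X c₂)
    (hpart : ∀ a, a ∈ h ↔ a ∈ c₁ ∨ a ∈ c₂) (hdisj : ∀ a ∈ c₁, a ∉ c₂)
    (hne1 : c₁.Nonempty) (hne2 : c₂.Nonempty) : PB X c₁ ∨ PB X c₂ := by
  obtain ⟨m, rest, hd, hm⟩ := hh
  have hXd : X = ([] : List ℕ) ++ m ++ rest := by simpa using hd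
  have hc1 : ConsecIn m c₁ := consecIn_restrict (hXd ▸ hX) (hXd ▸ h1)
    (fun a ha => (hm a).2 ((hpart a).2 (Or.inl ha)))
  have hc2 : ConsecIn m c₂ := consecIn_restrict (hXd ▸ hX) (hXd ▸ h2)
    (fun a ha => (hm a).2 ((hpart a).2 (Or.inr ha)))
  obtain ⟨u, w, v, hmeq, hw⟩ := hc1
  rcases eq_or_ne u [] with rfl | hu
  · exact Or.inl ⟨w, v ++ rest, by rw [hd, hmeq]; simp [List.append_assoc], hw⟩
  obtain ⟨u', w', v', hmeq', hw'⟩ := hc2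
  rcases eq_or_ne u' [] with rfl | hu'
  · exact Or.inr ⟨w', v' ++ rest, by rw [hd, hmeq']; simp [List.append_assoc], hw'⟩
  exfalso
  have hmne : m ≠ [] := by rw [hmeq]; simp [hu]
  have hmnd : m.Nodup := by
    have := hd ▸ hX
    exact (List.nodup_append.1 this).1
  have hhead1 : m.head hmne ∈ u := by
    have : (u ++ (w ++ v)).head (by simp [hu]) ∈ u := head_mem_left hu _
    have e : m.head hmne = (u ++ (w ++ v)).head (by simp [hu]) := by
      congr 1; simpa [List.append_assoc] using hmeq
    rw [e]; exact this
  have hheadm : m.head hmne ∈ m := List.head_mem hmne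
  have hc2head : m.head hmne ∈ c₂ := by
    rcases (hpart _).1 ((hm _).1 hheadm) with h | h
    · exact absurd ((nodup_parts (hmeq ▸ hmnd)).1 _ hhead1 ((hw _).2 h)) (fun f => f)
    · exact h
  have hhead2 : m.head hmne ∈ u' := by
    have : (u' ++ (w' ++ v')).head (by simp [hu']) ∈ u' := head_mem_left hu' _
    have e : m.head hmne = (u' ++ (w' ++ v')).head (by simp [hu']) := by
      congr 1; simpa [List.append_assoc] using hmeq'
    rw [e]; exact this
  exact (nodup_parts (hmeq' ▸ hmnd)).1 _ hhead2 ((hw' _).2 hc2head)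

lemma mem_take_iff_indexOf_lt {X : List ℕ} {a : ℕ} (k : ℕ) (h : a ∈ X) :
    a ∈ X.take k ↔ X.idxOf a < k := by
  induction X generalizing k with
  | nil => simp at h
  | cons b X ih =>
    rcases eq_or_ne b a with rfl | hba
    · cases k with
      | zero => simp
      | succ k => simp [List.idxOf_cons]
    · cases k with
      | zero => simp
      | succ k =>
        have ha : a ∈ X := by
          rcases List.mem_cons.1 h with h' | h'
          · exact absurd h'.symm hba
          · exact h'
        have hidx : List.idxOf a (b :: X) = List.idxOf a X + 1 := by
          simp [List.idxOf_cons, beq_iff_eq, hba]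
        simp only [List.take_succ_cons, List.mem_cons, hidx]
        rw [ih k ha]
        constructor
        · rintro (h' | h')
          · exact absurd h'.symm hba
          · omega
        · intro h'; right; omega

lemma indexOf_middle {X l m r : List ℕ} {a : ℕ} (hX : X.Nodup) (h : X = l ++ m ++ r)
    (ha : a ∈ m) : l.length ≤ X.idxOf a ∧ X.idxOf a < l.length + m.length := by
  subst h
  have hal : a ∉ l := fun hl => (nodup_parts hX).1 a hl ha
  rw [List.append_assoc, List.idxOf_append_of_notMem hal,
    List.idxOf_append_of_mem ha]
  have := List.idxOf_lt_length_iff.2 ha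
  omega

lemma getElem_middle {X l m r : List ℕ} {k : ℕ} (h : X = l ++ m ++ r)
    (h1 : l.length ≤ k) (h2 : k < l.length + m.length) (hk : k < X.length) :
    X[k] ∈ m := by
  subst h
  have hklm : k < (l ++ m).length := by simp only [List.length_append]; omega
  have e1 : (l ++ m ++ r)[k]'hk = (l ++ m)[k]'hklm := List.getElem_append_left hklm
  have e2 : (l ++ m)[k]'hklm = m[k - l.length]'(by simp only [List.length_append] at hklm; omega) :=
    List.getElem_append_right (by omega)
  rw [e1, e2]; exact List.getElem_mem _

lemma straddle {X : List ℕ} {s : Finset ℕ} {k : ℕ} (hX : X.Nodup) (h : ConsecIn X s)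
    (hk : k < X.length) (hin : ∃ a ∈ s, a ∈ X.take k)
    (hout : ∃ b ∈ s, b ∈ X ∧ b ∉ X.take k) : X[k] ∈ s := by
  obtain ⟨l, m, r, hd, hm⟩ := h
  obtain ⟨a, has, hatk⟩ := hin
  obtain ⟨b, hbs, hbX, hbtk⟩ := hout
  have haX : a ∈ X := List.take_subset k X hatk
  have h1 := indexOf_middle hX hd ((hm a).2 has)
  have h2 := indexOf_middle hX hd ((hm b).2 hbs)
  have ha' : X.idxOf a < k := (mem_take_iff_indexOf_lt k haX).1 hatk
  have hb' : ¬ X.idxOf b < k := fun hc => hbtk ((mem_take_iff_indexOf_lt k hbX).2 hc)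
  exact (hm _).1 (getElem_middle hd (by omega) (by omega) hk)

lemma startblock {X : List ℕ} {s : Finset ℕ} {k : ℕ} (hX : X.Nodup) (h : ConsecIn X s)
    (hk : k < X.length) (h1 : X[k] ∈ s) (h2 : ∀ a ∈ s, a ∉ X.take k) :
    PB (X.drop k) s := by
  obtain ⟨l, m, r, hd, hm⟩ := h
  have hkm : X[k] ∈ m := (hm _).2 h1
  have hb1 := indexOf_middle hX hd hkm
  have hik : X.idxOf X[k] = k := List.Nodup.idxOf_getElem hX k hk
  rw [hik] at hb1
  have hlk : l.length < X.length := by rw [hd]; simp; omega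
  have hfirst : X[l.length] ∈ m := getElem_middle hd le_rfl (by omega) hlk
  have hge : ¬ X.idxOf X[l.length] < k :=
    fun hc => h2 _ ((hm _).1 hfirst) ((mem_take_iff_indexOf_lt k (List.getElem_mem _)).2 hc)
  rw [List.Nodup.idxOf_getElem hX _ hlk] at hge
  have hlek : l.length = k := by omega
  refine ⟨m, r, ?_, hm⟩
  rw [← hlek, hd, List.append_assoc, List.drop_left]

lemma indexOf_inj {X : List ℕ} {a b : ℕ} (hX : X.Nodup) (ha : a ∈ X) (hb : b ∈ X)
    (h : X.idxOf a = X.idxOf b) : a = b := by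
  have h1 : X[X.idxOf a]'(List.idxOf_lt_length_iff.2 ha) = a := List.getElem_idxOf _
  have h2 : X[X.idxOf b]'(List.idxOf_lt_length_iff.2 hb) = b := List.getElem_idxOf _
  rw [← h1, ← h2]
  congr 1

lemma eq_of_order {X Y : List ℕ} (h1 : X.Nodup) (h2 : Y.Nodup)
    (hm : ∀ a, a ∈ X ↔ a ∈ Y)
    (hord : ∀ a b, a ∈ X → b ∈ X → X.idxOf a < X.idxOf b → Y.idxOf a < Y.idxOf b) :
    X = Y := by
  have hlen : X.length = Y.length := by
    have : X.toFinset = Y.toFinset := by ext a; simp [hm a]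
    rw [← List.toFinset_card_of_nodup h1, ← List.toFinset_card_of_nodup h2, this]
  have hord' : ∀ a b, a ∈ X → b ∈ X → Y.idxOf a < Y.idxOf b → X.idxOf a < X.idxOf b := by
    intro a b ha hb hYab
    rcases lt_trichotomy (X.idxOf a) (X.idxOf b) with h | h | h
    · exact h
    · exact absurd (indexOf_inj h1 ha hb h) (fun hab => by
        rw [hab] at hYab; exact lt_irrefl _ hYab)
    · exact absurd (hord b a hb ha h) (by omega)
  refine List.ext_getElem hlen ?_
  intro n hn hn'
  -- f i = Y.idxOf X[i], a strict mono self-map of Fin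
  have key : ∀ i (hi : i < X.length), Y.idxOf X[i] = i := by
    haveI : WellFoundedLT (Fin X.length) := Finite.to_wellFoundedLT
    have hf : ∀ i (hi : i < X.length), Y.idxOf X[i] < X.length := by
      intro i hi
      rw [hlen]
      exact List.idxOf_lt_length_iff.2 ((hm _).1 (List.getElem_mem _))
    set f : Fin X.length → Fin X.length :=
      fun i => ⟨Y.idxOf X[(i : ℕ)], hf i i.2⟩ with hfdef
    have hmono : StrictMono f := by
      intro i j hij
      have : X.idxOf X[(i:ℕ)] < X.idxOf X[(j:ℕ)] := by
        rw [List.Nodup.idxOf_getElem h1 _ i.2, List.Nodup.idxOf_getElem h1 _ j.2]; exact hij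
      exact hord _ _ (List.getElem_mem _) (List.getElem_mem _) this
    set g : Fin X.length → Fin X.length :=
      fun i => ⟨X.idxOf (Y[(i:ℕ)]'(hlen ▸ i.2)),
        List.idxOf_lt_length_iff.2 ((hm _).2 (List.getElem_mem _))⟩ with hgdef
    have hgmono : StrictMono g := by
      intro i j hij
      have : Y.idxOf (Y[(i:ℕ)]'(hlen ▸ i.2)) < Y.idxOf (Y[(j:ℕ)]'(hlen ▸ j.2)) := by
        rw [List.Nodup.idxOf_getElem h2 _ (hlen ▸ i.2), List.Nodup.idxOf_getElem h2 _ (hlen ▸ j.2)]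
        exact hij
      exact hord' _ _ ((hm _).2 (List.getElem_mem _)) ((hm _).2 (List.getElem_mem _)) this
    have hgf : ∀ i, g (f i) = i := by
      intro i
      have : Y[(f i : ℕ)]'(hlen ▸ (f i).2) = X[(i:ℕ)]'i.2 := by
        simp only [hfdef]
        exact List.getElem_idxOf _
      apply Fin.ext
      simp only [hgdef, this]
      exact List.Nodup.idxOf_getElem h1 _ i.2
    intro i hi
    have hle : (⟨i, hi⟩ : Fin X.length) ≤ f ⟨i, hi⟩ := hmono.le_apply
    have hle2 : f ⟨i, hi⟩ ≤ g (f ⟨i, hi⟩) := hgmono.le_apply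
    rw [hgf] at hle2
    have : f ⟨i, hi⟩ = ⟨i, hi⟩ := le_antisymm hle2 hle
    simpa [hfdef] using congrArg (fun x : Fin X.length => (x : ℕ)) this
  exact (indexOf_inj h2 ((hm _).1 (List.getElem_mem _)) (List.getElem_mem _)
    (by rw [key n hn, List.Nodup.idxOf_getElem h2 n hn']))

lemma indexOf_map {X : List ℕ} {f : ℕ → ℕ} (hf : Function.Injective f) (a : ℕ) :
    (X.map f).idxOf (f a) = X.idxOf a := by
  induction X with
  | nil => simp
  | cons b X ih =>
    have hbeq : (f b == f a) = (b == a) := by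
      by_cases h : b = a <;> simp [h, hf.eq_iff]
    simp only [List.map_cons, List.idxOf_cons, hbeq, ih]

lemma consecIn_map {X : List ℕ} {s : Finset ℕ} {f : ℕ → ℕ} (h : ConsecIn X s) :
    ConsecIn (X.map f) (s.image f) := by
  obtain ⟨l, m, r, rfl, hm⟩ := h
  refine ⟨l.map f, m.map f, r.map f, by simp, fun a => ?_⟩
  simp only [List.mem_map, Finset.mem_image]
  constructor
  · rintro ⟨b, hb, rfl⟩; exact ⟨b, (hm b).1 hb, rfl⟩
  · rintro ⟨b, hb, rfl⟩; exact ⟨b, (hm b).2 hb, rfl⟩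

lemma flipBlock_map {X X' : List ℕ} {s : Finset ℕ} {f : ℕ → ℕ}
    (h : FlipBlock s X X') : FlipBlock (s.image f) (X.map f) (X'.map f) := by
  obtain ⟨l, m, r, rfl, hm, rfl⟩ := h
  refine ⟨l.map f, m.map f, r.map f, by simp, fun a => ?_, by simp⟩
  simp only [List.mem_map, Finset.mem_image]
  constructor
  · rintro ⟨b, hb, rfl⟩; exact ⟨b, (hm b).1 hb, rfl⟩
  · rintro ⟨b, hb, rfl⟩; exact ⟨b, (hm b).2 hb, rfl⟩

lemma pb_nonempty {X : List ℕ} {s : Finset ℕ} (h : PB X s) (hs : s.Nonempty) : X ≠ [] := by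
  obtain ⟨x, hx⟩ := hs
  intro hX
  exact (List.not_mem_nil (a := x)) (hX ▸ pb_mem h hx)

/-- The abstract data of a planar tanglegram: two binary laminar families on `V`. -/
structure Lam where
  V : Finset ℕ
  A : Finset ℕ → Prop
  B : Finset ℕ → Prop
  rootA : A V
  rootB : B V
  subA : ∀ c, A c → c ⊆ V
  subB : ∀ c, B c → c ⊆ V
  neA : ∀ c, A c → c.Nonempty
  neB : ∀ c, B c → c.Nonempty
  splitA : ∀ c, A c → 2 ≤ c.card →
    ∃ c₁ c₂, A c₁ ∧ A c₂ ∧ Disjoint c₁ c₂ ∧ c₁ ∪ c₂ = c ∧ c₁.Nonempty ∧ c₂.Nonempty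
  splitB : ∀ c, B c → 2 ≤ c.card →
    ∃ c₁ c₂, B c₁ ∧ B c₂ ∧ Disjoint c₁ c₂ ∧ c₁ ∪ c₂ = c ∧ c₁.Nonempty ∧ c₂.Nonempty
  lamA : ∀ c d, A c → A d → c ⊆ d ∨ d ⊆ c ∨ Disjoint c d
  lamB : ∀ c d, B c → B d → c ⊆ d ∨ d ⊆ c ∨ Disjoint c d

namespace Lam

def Planar (I : Lam) (X : List ℕ) : Prop :=
  X.Nodup ∧ (∀ a, a ∈ X ↔ a ∈ I.V) ∧ (∀ c, I.A c → ConsecIn X c) ∧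
    (∀ c, I.B c → ConsecIn X c)

def Step (I : Lam) (X Y : List ℕ) : Prop :=
  ∃ c, I.A c ∧ I.B c ∧ 2 ≤ c.card ∧ FlipBlock c X Y

def Reach (I : Lam) : List ℕ → List ℕ → Prop :=
  Relation.ReflTransGen (fun X Y => I.Planar Y ∧ I.Step X Y)

def swap (I : Lam) : Lam :=
  ⟨I.V, I.B, I.A, I.rootB, I.rootA, I.subB, I.subA, I.neB, I.neA, I.splitB, I.splitA,
    I.lamB, I.lamA⟩

lemma planar_reverse {I : Lam} {X : List ℕ} (h : I.Planar X) : I.Planar X.reverse :=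
  ⟨List.nodup_reverse.mpr h.1, fun a => by rw [List.mem_reverse]; exact h.2.1 a,
    fun c hc => consecIn_reverse (h.2.2.1 c hc), fun c hc => consecIn_reverse (h.2.2.2 c hc)⟩

lemma flip_planar {I : Lam} {X X' : List ℕ} {c : Finset ℕ} (h : I.Planar X)
    (hA : I.A c) (hB : I.B c) (hf : FlipBlock c X X') : I.Planar X' := by
  obtain ⟨l, m, r, hd, hm, rfl⟩ := hf
  obtain ⟨hnd, hmem, hconsA, hconsB⟩ := h
  have hnd' : (l ++ m.reverse ++ r).Nodup := by
    have : (l ++ m.reverse ++ r).Perm (l ++ m ++ r) := by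
      refine List.Perm.append_right r (List.Perm.append_left l ?_)
      exact List.reverse_perm m
    exact this.nodup_iff.mpr (hd ▸ hnd)
  refine ⟨hnd', fun a => ?_, fun d hdc => ?_, fun d hdc => ?_⟩
  · rw [← hmem a, hd]; simp [List.mem_append, List.mem_reverse]
  · refine consecIn_flip hnd hd hm (hconsA d hdc) ?_ (I.neA c hA)
    rcases I.lamA d c hdc hA with h | h | h
    · exact Or.inl (fun a ha => h ha)
    · exact Or.inr (Or.inl (fun a ha => h ha))
    · exact Or.inr (Or.inr (fun a ha hc => (Finset.disjoint_left.1 h) ha hc))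
  · refine consecIn_flip hnd hd hm (hconsB d hdc) ?_ (I.neA c hA)
    rcases I.lamB d c hdc hB with h | h | h
    · exact Or.inl (fun a ha => h ha)
    · exact Or.inr (Or.inl (fun a ha => h ha))
    · exact Or.inr (Or.inr (fun a ha hc => (Finset.disjoint_left.1 h) ha hc))

end Lam

section Descent

/-- The main descent lemma: two clades from the two families, one strictly inside the
other, both prefix blocks of both lists, lead to a contradiction. -/
lemma descent : ∀ (N : ℕ) (A B : Finset ℕ → Prop) (Z Z' : List ℕ),
    Z.Nodup → Z'.Nodup →
    (∀ c, B c → 2 ≤ c.card →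
      ∃ c₁ c₂, B c₁ ∧ B c₂ ∧ Disjoint c₁ c₂ ∧ c₁ ∪ c₂ = c ∧ c₁.Nonempty ∧ c₂.Nonempty) →
    (∀ c, B c → (∀ a ∈ c, a ∈ Z) → ConsecIn Z c) →
    (∀ c, B c → (∀ a ∈ c, a ∈ Z') → ConsecIn Z' c) →
    ∀ (h₀ : Finset ℕ),
    (∀ c, A c → B c → 2 ≤ c.card → c ⊆ h₀ → False) →
    (∀ c, B c → A c → 2 ≤ c.card → c ⊆ h₀ → False) →
    (∀ w, PB Z {w} → PB Z' {w} → False) →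
    (∀ c, A c → 2 ≤ c.card →
      ∃ c₁ c₂, A c₁ ∧ A c₂ ∧ Disjoint c₁ c₂ ∧ c₁ ∪ c₂ = c ∧ c₁.Nonempty ∧ c₂.Nonempty) →
    (∀ c, A c → (∀ a ∈ c, a ∈ Z) → ConsecIn Z c) →
    (∀ c, A c → (∀ a ∈ c, a ∈ Z') → ConsecIn Z' c) →
    ∀ g h, h.card ≤ N → g.Nonempty → g ⊂ h → h ⊆ h₀ → A g → B h →
    PB Z g → PB Z' g → PB Z h → PB Z' h → False := by
  intro N
  induction N with
  | zero =>
    intro A B Z Z' _ _ _ _ _ h₀ _ _ _ _ _ _ g h hcard hg hgh _ _ _ _ _ _ _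
    have : g.card < h.card := Finset.card_lt_card hgh
    have : 1 ≤ g.card := Finset.card_pos.2 hg
    omega
  | succ N ih =>
    intro A B Z Z' hZ hZ' splitB consZB consZ'B h₀ Hsmall Hsmall' Hbase splitA consZA consZ'A
      g h hcard hg hgh hh₀ hAg hBh pbZg pbZ'g pbZh pbZ'h
    have hgsub : g ⊆ h := hgh.1
    have hcard2 : 2 ≤ h.card := by
      have h1 : g.card < h.card := Finset.card_lt_card hgh
      have h2 : 1 ≤ g.card := Finset.card_pos.2 hg
      omega
    obtain ⟨h₁, h₂, hB1, hB2, hdis, hun, hne1, hne2⟩ := splitB h hBh hcard2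
    have hmemZ : ∀ a ∈ h, a ∈ Z := fun a ha => pb_mem pbZh ha
    have hmemZ' : ∀ a ∈ h, a ∈ Z' := fun a ha => pb_mem pbZ'h ha
    have hsub1 : h₁ ⊆ h := hun ▸ Finset.subset_union_left
    have hsub2 : h₂ ⊆ h := hun ▸ Finset.subset_union_right
    have hss1 : h₁ ⊂ h := Finset.ssubset_iff_subset_ne.2 ⟨hsub1, fun he => by
      obtain ⟨x, hx⟩ := hne2
      exact Finset.disjoint_left.1 hdis (by rw [he]; exact hsub2 hx) hx⟩
    have hss2 : h₂ ⊂ h := Finset.ssubset_iff_subset_ne.2 ⟨hsub2, fun he => by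
      obtain ⟨x, hx⟩ := hne1
      exact Finset.disjoint_left.1 hdis hx (by rw [he]; exact hsub1 hx)⟩
    have hpart : ∀ a, a ∈ h ↔ a ∈ h₁ ∨ a ∈ h₂ := fun a => by
      rw [← hun, Finset.mem_union]
    have hdisj' : ∀ a ∈ h₁, a ∉ h₂ := fun a ha => Finset.disjoint_left.1 hdis ha
    have hfZ : PB Z h₁ ∨ PB Z h₂ := front_child hZ pbZh
      (consZB h₁ hB1 (fun a ha => hmemZ a (hsub1 ha)))
      (consZB h₂ hB2 (fun a ha => hmemZ a (hsub2 ha))) hpart hdisj' hne1 hne2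
    have hfZ' : PB Z' h₁ ∨ PB Z' h₂ := front_child hZ' pbZ'h
      (consZ'B h₁ hB1 (fun a ha => hmemZ' a (hsub1 ha)))
      (consZ'B h₂ hB2 (fun a ha => hmemZ' a (hsub2 ha))) hpart hdisj' hne1 hne2
    have key : ∀ f f', B f → B f' → f.Nonempty → f'.Nonempty →
        (f = f' ∨ (Disjoint f f' ∧ f ∪ f' = h)) → f ⊂ h → f' ⊂ h →
        PB Z f → PB Z' f' → False := by
      intro f f' hBf hBf' hnef hnef' hor hfss hf'ss pbf pbf'
      have hcf : f.card ≤ N := by have := Finset.card_lt_card hfss; omega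
      have hcg : g.card ≤ N := by have h1 := Finset.card_lt_card hgh; omega
      have t1 : g ⊆ f ∨ f ⊆ g := by
        rcases pb_subset_total pbZg pbf with h' | h'
        · exact Or.inl (fun a ha => h' a ha)
        · exact Or.inr (fun a ha => h' a ha)
      have t2 : g ⊆ f' ∨ f' ⊆ g := by
        rcases pb_subset_total pbZ'g pbf' with h' | h'
        · exact Or.inl (fun a ha => h' a ha)
        · exact Or.inr (fun a ha => h' a ha)
      by_cases hgf : g = f ∨ g = f'
      · have hBg : B g := by
          rcases hgf with rfl | rfl
          · exact hBf
          · exact hBf'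
        rcases Nat.lt_or_ge g.card 2 with hc | hc
        · have hpos := Finset.card_pos.2 hg
          obtain ⟨w, hw⟩ := Finset.card_eq_one.1 (by omega : g.card = 1)
          subst hw
          exact Hbase w pbZg pbZ'g
        · exact Hsmall g hAg hBg hc (hgsub.trans hh₀)
      push_neg at hgf
      obtain ⟨hgf1, hgf2⟩ := hgf
      rcases t1 with hsub1' | hsub1'
      · rcases t2 with hsub2' | hsub2'
        · -- g ⊊ f and g ⊊ f' : f = f', recurse with same orientation
          have hff : f = f' := by
            rcases hor with h' | ⟨hd2, _⟩
            · exact h'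
            · exfalso
              obtain ⟨x, hx⟩ := hg
              exact Finset.disjoint_left.1 hd2 (hsub1' hx) (hsub2' hx)
          subst hff
          exact ih A B Z Z' hZ hZ' splitB consZB consZ'B h₀ Hsmall Hsmall' Hbase
            splitA consZA consZ'A g f hcf hg
            (Finset.ssubset_iff_subset_ne.2 ⟨hsub1', hgf1⟩)
            (hfss.1.trans hh₀) hAg hBf pbZg pbZ'g pbf pbf'
        · -- f' ⊆ g ⊆ f
          rcases hor with h' | ⟨hd2, _⟩
          · subst h'
            exact hgf1 (le_antisymm hsub1' hsub2')
          · obtain ⟨x, hx⟩ := hnef'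
            exact Finset.disjoint_left.1 hd2 (hsub1' (hsub2' hx)) hx
      · rcases t2 with hsub2' | hsub2'
        · -- f ⊆ g ⊆ f'
          rcases hor with h' | ⟨hd2, _⟩
          · subst h'
            exact hgf1 (le_antisymm hsub2' hsub1')
          · obtain ⟨x, hx⟩ := hnef
            exact Finset.disjoint_left.1 hd2 hx (hsub2' (hsub1' hx))
        · -- f ⊆ g and f' ⊆ g
          rcases hor with h' | ⟨hd2, hu2⟩
          · subst h'
            exact ih B A Z Z' hZ hZ' splitA consZA consZ'A h₀ Hsmall' Hsmall Hbase
              splitB consZB consZ'B f g hcg hnef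
              (Finset.ssubset_iff_subset_ne.2 ⟨hsub1', fun he => hgf1 he.symm⟩)
              (hgsub.trans hh₀) hBf hAg pbf pbf' pbZg pbZ'g
          · exact hgh.2 (by rw [← hu2]; exact Finset.union_subset hsub1' hsub2')
    rcases hfZ with hf1 | hf2
    · rcases hfZ' with hf1' | hf2'
      · exact key h₁ h₁ hB1 hB1 hne1 hne1 (Or.inl rfl) hss1 hss1 hf1 hf1'
      · exact key h₁ h₂ hB1 hB2 hne1 hne2 (Or.inr ⟨hdis, hun⟩) hss1 hss2 hf1 hf2'
    · rcases hfZ' with hf1' | hf2'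
      · exact key h₂ h₁ hB2 hB1 hne2 hne1
          (Or.inr ⟨hdis.symm, by rw [Finset.union_comm]; exact hun⟩) hss2 hss1 hf2 hf1'
      · exact key h₂ h₂ hB2 hB2 hne2 hne2 (Or.inl rfl) hss2 hss2 hf2 hf2'

end Descent

section Rigid

open scoped Classical

/-- One orientation of the minimal-clades argument in the "no proper clade contains
both heads" lemma. -/
lemma noc_aux (A B : Finset ℕ → Prop) (X X' : List ℕ) (hX : X.Nodup) (hX' : X'.Nodup)
    (hneX : X ≠ []) (hneX' : X' ≠ [])
    (consA : ∀ c, A c → ConsecIn X c) (consA' : ∀ c, A c → ConsecIn X' c)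
    (consB : ∀ c, B c → ConsecIn X c) (consB' : ∀ c, B c → ConsecIn X' c)
    (splitA : ∀ c, A c → 2 ≤ c.card →
      ∃ c₁ c₂, A c₁ ∧ A c₂ ∧ Disjoint c₁ c₂ ∧ c₁ ∪ c₂ = c ∧ c₁.Nonempty ∧ c₂.Nonempty)
    {x y : ℕ} (hxy : x ≠ y) (hhx : X.head hneX = x) (hhy : X'.head hneX' = y)
    (Wa Wb : Finset ℕ) (hA : A Wa) (hB : B Wb)
    (hxa : x ∈ Wa) (hya : y ∈ Wa) (hxb : x ∈ Wb) (hyb : y ∈ Wb)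
    (hmin : ∀ c, A c → x ∈ c → y ∈ c → Wa.card ≤ c.card) :
    Wa ⊆ Wb := by
  have hcard : 2 ≤ Wa.card := Finset.one_lt_card.2 ⟨x, hxa, y, hya, hxy⟩
  obtain ⟨c₁, c₂, hA1, hA2, hdis, hun, hne1, hne2⟩ := splitA Wa hA hcard
  have hmemor : ∀ a ∈ Wa, a ∈ c₁ ∨ a ∈ c₂ := fun a ha => by
    rw [← hun] at ha; exact Finset.mem_union.1 ha
  have hss : ∀ c', A c' → c' ⊆ Wa → c' ≠ Wa → ¬(x ∈ c' ∧ y ∈ c') := by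
    rintro c' hc' hsub hcne ⟨hxc, hyc⟩
    exact hcne (Finset.eq_of_subset_of_card_le hsub (hmin c' hc' hxc hyc))
  have hsub1 : c₁ ⊆ Wa := hun ▸ Finset.subset_union_left
  have hsub2 : c₂ ⊆ Wa := hun ▸ Finset.subset_union_right
  have hss1 : c₁ ≠ Wa := by
    rintro rfl
    obtain ⟨t, ht⟩ := hne2
    exact Finset.disjoint_left.1 hdis (hsub2 ht) ht
  have hss2 : c₂ ≠ Wa := by
    rintro rfl
    obtain ⟨t, ht⟩ := hne1
    exact Finset.disjoint_left.1 hdis ht (hsub1 ht)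
  obtain ⟨ax, ay, hAx, hAy, hdis2, hxax, hyay, hunx⟩ :
      ∃ ax ay, A ax ∧ A ay ∧ Disjoint ax ay ∧ x ∈ ax ∧ y ∈ ay ∧ ax ∪ ay = Wa := by
    rcases hmemor x hxa with hx1 | hx2
    · rcases hmemor y hya with hy1 | hy2
      · exact absurd ⟨hx1, hy1⟩ (hss c₁ hA1 hsub1 hss1)
      · exact ⟨c₁, c₂, hA1, hA2, hdis, hx1, hy2, hun⟩
    · rcases hmemor y hya with hy1 | hy2
      · exact ⟨c₂, c₁, hA2, hA1, hdis.symm, hx2, hy1, by rw [Finset.union_comm]; exact hun⟩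
      · exact absurd ⟨hx2, hy2⟩ (hss c₂ hA2 hsub2 hss2)
  have pbWb : PB X Wb := pb_of_head hX (consB Wb hB) hneX (hhx ▸ hxb)
  have pbax : PB X ax := pb_of_head hX (consA ax hAx) hneX (hhx ▸ hxax)
  have pbWb' : PB X' Wb := pb_of_head hX' (consB' Wb hB) hneX' (hhy ▸ hyb)
  have pbay : PB X' ay := pb_of_head hX' (consA' ay hAy) hneX' (hhy ▸ hyay)
  have h1 : ax ⊆ Wb := by
    rcases pb_subset_total pbWb pbax with h' | h'
    · exact absurd (h' y hyb) (fun hc => Finset.disjoint_left.1 hdis2 hc hyay)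
    · exact fun a ha => h' a ha
  have h2 : ay ⊆ Wb := by
    rcases pb_subset_total pbWb' pbay with h' | h'
    · exact absurd (h' x hxb) (fun hc => Finset.disjoint_left.1 hdis2 hxax hc)
    · exact fun a ha => h' a ha
  rw [← hunx]
  exact Finset.union_subset h1 h2

/-- No proper clade contains the heads of two planar layouts (irreducible case). -/
lemma noc (I : Lam) (Irr : ∀ c, I.A c → I.B c → 2 ≤ c.card → c = I.V)
    {X X' : List ℕ} (hX : I.Planar X) (hX' : I.Planar X')
    (hneX : X ≠ []) (hneX' : X' ≠ []) {x y : ℕ} (hxy : x ≠ y)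
    (hhx : X.head hneX = x) (hhy : X'.head hneX' = y) :
    ∀ c, (I.A c ∨ I.B c) → x ∈ c → y ∈ c → c = I.V := by
  have hxV : x ∈ I.V := (hX.2.1 x).1 (hhx ▸ List.head_mem hneX)
  have hyV : y ∈ I.V := (hX'.2.1 y).1 (hhy ▸ List.head_mem hneX')
  obtain ⟨Wa, hWa, hWamin⟩ := Finset.exists_min_image
    (I.V.powerset.filter (fun c => I.A c ∧ x ∈ c ∧ y ∈ c)) Finset.card
    ⟨I.V, Finset.mem_filter.2 ⟨Finset.mem_powerset_self _, I.rootA, hxV, hyV⟩⟩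
  obtain ⟨Wb, hWb, hWbmin⟩ := Finset.exists_min_image
    (I.V.powerset.filter (fun c => I.B c ∧ x ∈ c ∧ y ∈ c)) Finset.card
    ⟨I.V, Finset.mem_filter.2 ⟨Finset.mem_powerset_self _, I.rootB, hxV, hyV⟩⟩
  obtain ⟨-, hAa, hxa, hya⟩ := Finset.mem_filter.1 hWa
  obtain ⟨-, hBb, hxb, hyb⟩ := Finset.mem_filter.1 hWb
  have hmina : ∀ c, I.A c → x ∈ c → y ∈ c → Wa.card ≤ c.card := fun c hc h1 h2 =>
    hWamin c (Finset.mem_filter.2 ⟨Finset.mem_powerset.2 (I.subA c hc), hc, h1, h2⟩)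
  have hminb : ∀ c, I.B c → x ∈ c → y ∈ c → Wb.card ≤ c.card := fun c hc h1 h2 =>
    hWbmin c (Finset.mem_filter.2 ⟨Finset.mem_powerset.2 (I.subB c hc), hc, h1, h2⟩)
  have hab : Wa ⊆ Wb := noc_aux I.A I.B X X' hX.1 hX'.1 hneX hneX'
    (fun c hc => hX.2.2.1 c hc) (fun c hc => hX'.2.2.1 c hc)
    (fun c hc => hX.2.2.2 c hc) (fun c hc => hX'.2.2.2 c hc)
    I.splitA hxy hhx hhy Wa Wb hAa hBb hxa hya hxb hyb hmina
  have hba : Wb ⊆ Wa := noc_aux I.B I.A X X' hX.1 hX'.1 hneX hneX'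
    (fun c hc => hX.2.2.2 c hc) (fun c hc => hX'.2.2.2 c hc)
    (fun c hc => hX.2.2.1 c hc) (fun c hc => hX'.2.2.1 c hc)
    I.splitB hxy hhx hhy Wb Wa hBb hAa hxb hyb hxa hya hminb
  have heq : Wa = Wb := le_antisymm hab hba
  have hcard : 2 ≤ Wa.card := Finset.one_lt_card.2 ⟨x, hxa, y, hya, hxy⟩
  have hWaV : Wa = I.V := Irr Wa hAa (heq ▸ hBb) hcard
  intro c hc h1 h2
  rcases hc with hc | hc
  · refine (Finset.eq_of_subset_of_card_le (I.subA c hc) ?_)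
    calc I.V.card = Wa.card := by rw [hWaV]
    _ ≤ c.card := hmina c hc h1 h2
  · refine (Finset.eq_of_subset_of_card_le (I.subB c hc) ?_)
    calc I.V.card = Wb.card := by rw [← heq, hWaV]
    _ ≤ c.card := hminb c hc h1 h2

/-- In the irreducible case, the head of any planar layout is the head or the
last element of any other planar layout. -/
lemma head_or_last (I : Lam) (Irr : ∀ c, I.A c → I.B c → 2 ≤ c.card → c = I.V)
    {X X' : List ℕ} (hX : I.Planar X) (hX' : I.Planar X')
    (hneX : X ≠ []) (hneX' : X' ≠ []) :
    X'.head hneX' = X.head hneX ∨ X'.head hneX' = X.getLast hneX := by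
  by_contra hcon
  push_neg at hcon
  obtain ⟨hy1, hy2⟩ := hcon
  set x := X.head hneX with hxdef
  set y := X'.head hneX' with hydef
  have hxy : x ≠ y := fun h => hy1 h.symm
  have hnoc := noc I Irr hX hX' hneX hneX' hxy rfl rfl
  have hxV : x ∈ I.V := (hX.2.1 x).1 (List.head_mem hneX)
  have hyV : y ∈ I.V := (hX'.2.1 y).1 (List.head_mem hneX')
  have hVcard : 2 ≤ I.V.card := Finset.one_lt_card.2 ⟨x, hxV, y, hyV, hxy⟩
  have hsep : ∀ {c₁ c₂ : Finset ℕ}, (I.A c₁ ∨ I.B c₁) → Disjoint c₁ c₂ →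
      c₁ ∪ c₂ = I.V → c₂.Nonempty → x ∈ c₁ → y ∉ c₁ := by
    intro c₁ c₂ h1 hd hu hn2 hxc hyc
    have heq := hnoc c₁ h1 hxc hyc
    obtain ⟨t, ht⟩ := hn2
    have htc : t ∈ c₁ := by
      rw [heq, ← hu]; exact Finset.mem_union_right _ ht
    exact Finset.disjoint_left.1 hd htc ht
  obtain ⟨L, R, hAL, hAR, hdLR, huLR, hxL, hyR⟩ :
      ∃ L R, I.A L ∧ I.A R ∧ Disjoint L R ∧ L ∪ R = I.V ∧ x ∈ L ∧ y ∈ R := by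
    obtain ⟨a₁, a₂, hA1, hA2, hdisA, hunA, hneA1, hneA2⟩ := I.splitA I.V I.rootA hVcard
    have hyor : y ∈ a₁ ∨ y ∈ a₂ := by rw [← Finset.mem_union, hunA]; exact hyV
    rcases (by rw [← Finset.mem_union, hunA]; exact hxV : x ∈ a₁ ∨ x ∈ a₂) with hx1 | hx2
    · have hyn := hsep (Or.inl hA1) hdisA hunA hneA2 hx1
      exact ⟨a₁, a₂, hA1, hA2, hdisA, hunA, hx1, hyor.resolve_left hyn⟩
    · have hyn := hsep (Or.inl hA2) hdisA.symm (by rw [Finset.union_comm]; exact hunA) hneA1 hx2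
      exact ⟨a₂, a₁, hA2, hA1, hdisA.symm, by rw [Finset.union_comm]; exact hunA, hx2,
        hyor.resolve_right hyn⟩
  obtain ⟨P, Q, hBP, hBQ, hdPQ, huPQ, hxP, hyQ⟩ :
      ∃ P Q, I.B P ∧ I.B Q ∧ Disjoint P Q ∧ P ∪ Q = I.V ∧ x ∈ P ∧ y ∈ Q := by
    obtain ⟨b₁, b₂, hB1, hB2, hdisB, hunB, hneB1, hneB2⟩ := I.splitB I.V I.rootB hVcard
    have hyor : y ∈ b₁ ∨ y ∈ b₂ := by rw [← Finset.mem_union, hunB]; exact hyV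
    rcases (by rw [← Finset.mem_union, hunB]; exact hxV : x ∈ b₁ ∨ x ∈ b₂) with hx1 | hx2
    · have hyn := hsep (Or.inr hB1) hdisB hunB hneB2 hx1
      exact ⟨b₁, b₂, hB1, hB2, hdisB, hunB, hx1, hyor.resolve_left hyn⟩
    · have hyn := hsep (Or.inr hB2) hdisB.symm (by rw [Finset.union_comm]; exact hunB) hneB1 hx2
      exact ⟨b₂, b₁, hB2, hB1, hdisB.symm, by rw [Finset.union_comm]; exact hunB, hx2,
        hyor.resolve_right hyn⟩
  have hRL : R = I.V \ L := by
    ext t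
    simp only [Finset.mem_sdiff, ← huLR, Finset.mem_union]
    constructor
    · intro ht
      exact ⟨Or.inr ht, fun hl => Finset.disjoint_left.1 hdLR hl ht⟩
    · rintro ⟨ht | ht, hnl⟩
      · exact absurd ht hnl
      · exact ht
  have hQP : Q = I.V \ P := by
    ext t
    simp only [Finset.mem_sdiff, ← huPQ, Finset.mem_union]
    constructor
    · intro ht
      exact ⟨Or.inr ht, fun hl => Finset.disjoint_left.1 hdPQ hl ht⟩
    · rintro ⟨ht | ht, hnl⟩
      · exact absurd ht hnl
      · exact ht
  have hrne : X.reverse ≠ [] := by simpa using hneX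
  have pbXL : PB X L := pb_of_head hX.1 (hX.2.2.1 L hAL) hneX hxL
  have pbXP : PB X P := pb_of_head hX.1 (hX.2.2.2 P hBP) hneX hxP
  have pbZR : PB X.reverse R := by rw [hRL]; exact pb_compl hX.1 hX.2.1 pbXL
  have pbZQ : PB X.reverse Q := by rw [hQP]; exact pb_compl hX.1 hX.2.1 pbXP
  have pbX'R : PB X' R := pb_of_head hX'.1 (hX'.2.2.1 R hAR) hneX' hyR
  have pbX'Q : PB X' Q := pb_of_head hX'.1 (hX'.2.2.2 Q hBQ) hneX' hyQ
  have Hbase : ∀ w, PB X.reverse {w} → PB X' {w} → False := by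
    intro w hw1 hw2
    have h1 : X.reverse.head hrne = w := pb_singleton_head hw1 hrne
    have h2 : X'.head hneX' = w := pb_singleton_head hw2 hneX'
    rw [List.head_reverse] at h1
    exact hy2 (h2.trans h1.symm)
  by_cases heqRQ : R = Q
  · rcases Nat.lt_or_ge R.card 2 with hc | hc
    · have hRy : R = {y} := by
        refine Finset.eq_singleton_iff_unique_mem.2 ⟨hyR, fun t ht => ?_⟩
        exact Finset.card_le_one.1 (by omega) t ht y hyR
      exact Hbase y (hRy ▸ pbZR) (hRy ▸ pbX'R)
    · have hRV : R = I.V := Irr R hAR (heqRQ ▸ hBQ) hc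
      have : x ∈ R := hRV ▸ hxV
      exact Finset.disjoint_left.1 hdLR hxL this
  · have consZA : ∀ c, I.A c → (∀ a ∈ c, a ∈ X.reverse) → ConsecIn X.reverse c :=
      fun c hc _ => consecIn_reverse (hX.2.2.1 c hc)
    have consZB : ∀ c, I.B c → (∀ a ∈ c, a ∈ X.reverse) → ConsecIn X.reverse c :=
      fun c hc _ => consecIn_reverse (hX.2.2.2 c hc)
    have consZ'A : ∀ c, I.A c → (∀ a ∈ c, a ∈ X') → ConsecIn X' c :=
      fun c hc _ => hX'.2.2.1 c hc
    have consZ'B : ∀ c, I.B c → (∀ a ∈ c, a ∈ X') → ConsecIn X' c :=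
      fun c hc _ => hX'.2.2.2 c hc
    rcases pb_subset_total pbZR pbZQ with hsub | hsub
    · -- R ⊊ Q : inner R (family A), outer Q (family B)
      have hsub' : R ⊆ Q := fun a ha => hsub a ha
      have HsmallQ : ∀ c, I.A c → I.B c → 2 ≤ c.card → c ⊆ Q → False := by
        intro c h1 h2 h3 h4
        have := Irr c h1 h2 h3
        exact Finset.disjoint_left.1 hdPQ hxP (h4 (this ▸ hxV))
      exact descent Q.card I.A I.B X.reverse X' (List.nodup_reverse.mpr hX.1) hX'.1
        I.splitB consZB consZ'B Q HsmallQ (fun c h1 h2 => HsmallQ c h2 h1) Hbase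
        I.splitA consZA consZ'A R Q le_rfl ⟨y, hyR⟩
        (Finset.ssubset_iff_subset_ne.2 ⟨hsub', heqRQ⟩) le_rfl hAR hBQ
        pbZR pbX'R pbZQ pbX'Q
    · -- Q ⊊ R : inner Q (family B), outer R (family A)
      have hsub' : Q ⊆ R := fun a ha => hsub a ha
      have HsmallR : ∀ c, I.B c → I.A c → 2 ≤ c.card → c ⊆ R → False := by
        intro c h1 h2 h3 h4
        have := Irr c h2 h1 h3
        exact Finset.disjoint_left.1 hdLR hxL (h4 (this ▸ hxV))
      exact descent R.card I.B I.A X.reverse X' (List.nodup_reverse.mpr hX.1) hX'.1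
        I.splitA consZA consZ'A R HsmallR (fun c h1 h2 => HsmallR c h2 h1) Hbase
        I.splitB consZB consZ'B Q R le_rfl ⟨y, hyQ⟩
        (Finset.ssubset_iff_subset_ne.2 ⟨hsub', fun he => heqRQ he.symm⟩) le_rfl hBQ hAR
        pbZQ pbX'Q pbZR pbX'R

/-- The forcing lemma: two planar layouts with the same nonempty proper prefix have
the same next element (irreducible case). -/
lemma force (I : Lam) (Irr : ∀ c, I.A c → I.B c → 2 ≤ c.card → c = I.V)
    {X X' : List ℕ} (hX : I.Planar X) (hX' : I.Planar X')
    {k : ℕ} (hk1 : 1 ≤ k) (hkX : k < X.length) (hkX' : k < X'.length)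
    (htake : X.take k = X'.take k) : X[k] = X'[k] := by
  by_contra hne
  have h0X : 0 < X.length := by omega
  have hx0 : X[0] ∈ X.take k := by
    refine (mem_take_iff_indexOf_lt k (List.getElem_mem _)).2 ?_
    rw [List.Nodup.idxOf_getElem hX.1 0 h0X]; omega
  have hxkn : X[k] ∉ X.take k := by
    intro hc
    have := (mem_take_iff_indexOf_lt k (List.getElem_mem _)).1 hc
    rw [List.Nodup.idxOf_getElem hX.1 k hkX] at this; omega
  have hxkn' : X'[k] ∉ X'.take k := by
    intro hc
    have := (mem_take_iff_indexOf_lt k (List.getElem_mem _)).1 hc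
    rw [List.Nodup.idxOf_getElem hX'.1 k hkX'] at this; omega
  -- a clade is "active" if it has an element in the prefix and one outside
  have minact : ∀ (P : Finset ℕ → Prop), P I.V → (∀ c, P c → c ⊆ I.V) →
      (∀ c, P c → 2 ≤ c.card →
        ∃ c₁ c₂, P c₁ ∧ P c₂ ∧ Disjoint c₁ c₂ ∧ c₁ ∪ c₂ = c ∧ c₁.Nonempty ∧ c₂.Nonempty) →
      (∀ c, P c → ConsecIn X c) → (∀ c, P c → ConsecIn X' c) →
      ∃ s, P s ∧ (∀ a ∈ s, a ∉ X.take k) ∧ X[k] ∈ s ∧ X'[k] ∈ s := by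
    intro P hPV hsub hsplit hconsX hconsX'
    classical
    set act : Finset ℕ → Prop :=
      fun c => (∃ a ∈ c, a ∈ X.take k) ∧ (∃ b ∈ c, b ∉ X.take k) with hact
    have hVact : act I.V := by
      refine ⟨⟨X[0], (hX.2.1 _).1 (List.getElem_mem _), hx0⟩,
        ⟨X[k], (hX.2.1 _).1 (List.getElem_mem _), hxkn⟩⟩
    obtain ⟨s₀, hs₀, hs₀min⟩ := Finset.exists_min_image
      (I.V.powerset.filter (fun c => P c ∧ act c)) Finset.card
      ⟨I.V, Finset.mem_filter.2 ⟨Finset.mem_powerset_self _, hPV, hVact⟩⟩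
    obtain ⟨-, hPs₀, hacts₀⟩ := Finset.mem_filter.1 hs₀
    have hmin : ∀ c, P c → act c → s₀.card ≤ c.card := fun c h1 h2 =>
      hs₀min c (Finset.mem_filter.2 ⟨Finset.mem_powerset.2 (hsub c h1), h1, h2⟩)
    obtain ⟨⟨a', ha's, ha'tk⟩, ⟨b', hb's, hb'tk⟩⟩ := hacts₀
    have hXk : X[k] ∈ s₀ := straddle hX.1 (hconsX s₀ hPs₀) hkX ⟨a', ha's, ha'tk⟩
      ⟨b', hb's, (hX.2.1 b').2 (hsub s₀ hPs₀ hb's), hb'tk⟩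
    have hX'k : X'[k] ∈ s₀ := by
      refine straddle hX'.1 (hconsX' s₀ hPs₀) hkX' ⟨a', ha's, ?_⟩
        ⟨b', hb's, (hX'.2.1 b').2 (hsub s₀ hPs₀ hb's), ?_⟩
      · rw [← htake]; exact ha'tk
      · rw [← htake]; exact hb'tk
    have hcard : 2 ≤ s₀.card := by
      rcases Nat.lt_or_ge s₀.card 2 with hc | hc
      · exfalso
        have := Finset.card_le_one.1 (by omega) a' ha's X[k] hXk
        rw [this] at ha'tk
        exact hxkn ha'tk
      · exact hc
    obtain ⟨c₁, c₂, hP1, hP2, hdis, hun, hne1, hne2⟩ := hsplit s₀ hPs₀ hcard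
    have hmemor : ∀ a ∈ s₀, a ∈ c₁ ∨ a ∈ c₂ := fun a ha => by
      rw [← hun] at ha; exact Finset.mem_union.1 ha
    have hccard : c₁.card < s₀.card ∧ c₂.card < s₀.card := by
      constructor
      · refine Finset.card_lt_card (Finset.ssubset_iff_subset_ne.2
          ⟨hun ▸ Finset.subset_union_left, fun he => ?_⟩)
        obtain ⟨t, ht⟩ := hne2
        exact Finset.disjoint_left.1 hdis (by rw [he, ← hun]; exact Finset.mem_union_right _ ht) ht
      · refine Finset.card_lt_card (Finset.ssubset_iff_subset_ne.2
          ⟨hun ▸ Finset.subset_union_right, fun he => ?_⟩)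
        obtain ⟨t, ht⟩ := hne1
        exact Finset.disjoint_left.1 hdis ht (by rw [he, ← hun]; exact Finset.mem_union_left _ ht)
    have hnact : ∀ c', P c' → c'.card < s₀.card → ¬ act c' := fun c' h1 h2 hc =>
      absurd (hmin c' h1 hc) (by omega)
    -- the child containing X[k] is all-outside
    have main : ∀ ca cb, P ca → P cb → Disjoint ca cb → ca ∪ cb = s₀ →
        ca.card < s₀.card → cb.card < s₀.card →
        a' ∈ ca → X[k] ∈ cb → ∃ s, P s ∧ (∀ a ∈ s, a ∉ X.take k) ∧ X[k] ∈ s ∧ X'[k] ∈ s := by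
      intro ca cb hPa hPb hd hu hca hcb ha hk'
      have hallout : ∀ a ∈ cb, a ∉ X.take k := by
        intro t ht htk
        exact hnact cb hPb hcb ⟨⟨t, ht, htk⟩, ⟨X[k], hk', hxkn⟩⟩
      have hallin : ∀ a ∈ ca, a ∈ X.take k := by
        intro t ht
        by_contra htk
        exact hnact ca hPa hca ⟨⟨a', ha, ha'tk⟩, ⟨t, ht, htk⟩⟩
      have hmemor2 : ∀ a ∈ s₀, a ∈ ca ∨ a ∈ cb := fun a ha => by
        rw [← hu] at ha; exact Finset.mem_union.1 ha
      refine ⟨cb, hPb, hallout, hk', ?_⟩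
      rcases hmemor2 X'[k] hX'k with hc | hc
      · exfalso
        have := hallin _ hc
        rw [htake] at this
        exact hxkn' this
      · exact hc
    rcases hmemor a' ha's with ha1 | ha2
    · rcases hmemor X[k] hXk with hk1' | hk2'
      · exfalso
        exact hnact c₁ hP1 hccard.1 ⟨⟨a', ha1, ha'tk⟩, ⟨X[k], hk1', hxkn⟩⟩
      · exact main c₁ c₂ hP1 hP2 hdis hun hccard.1 hccard.2 ha1 hk2'
    · rcases hmemor X[k] hXk with hk1' | hk2'
      · exact main c₂ c₁ hP2 hP1 hdis.symm (by rw [Finset.union_comm]; exact hun)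
          hccard.2 hccard.1 ha2 hk1'
      · exfalso
        exact hnact c₂ hP2 hccard.2 ⟨⟨a', ha2, ha'tk⟩, ⟨X[k], hk2', hxkn⟩⟩
  obtain ⟨sA, hsA, houtA, hkA, hk'A⟩ := minact I.A I.rootA I.subA I.splitA
    (fun c hc => hX.2.2.1 c hc) (fun c hc => hX'.2.2.1 c hc)
  obtain ⟨sB, hsB, houtB, hkB, hk'B⟩ := minact I.B I.rootB I.subB I.splitB
    (fun c hc => hX.2.2.2 c hc) (fun c hc => hX'.2.2.2 c hc)
  have houtA' : ∀ a ∈ sA, a ∉ X'.take k := by rw [← htake]; exact houtA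
  have houtB' : ∀ a ∈ sB, a ∉ X'.take k := by rw [← htake]; exact houtB
  have pbA : PB (X.drop k) sA := startblock hX.1 (hX.2.2.1 sA hsA) hkX hkA houtA
  have pbB : PB (X.drop k) sB := startblock hX.1 (hX.2.2.2 sB hsB) hkX hkB houtB
  have pbA' : PB (X'.drop k) sA := startblock hX'.1 (hX'.2.2.1 sA hsA) hkX' hk'A houtA'
  have pbB' : PB (X'.drop k) sB := startblock hX'.1 (hX'.2.2.2 sB hsB) hkX' hk'B houtB'
  have hdZ : (X.drop k).Nodup := (List.drop_sublist k X).nodup hX.1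
  have hdZ' : (X'.drop k).Nodup := (List.drop_sublist k X').nodup hX'.1
  have consZ : ∀ c, (I.A c ∨ I.B c) → (∀ a ∈ c, a ∈ X.drop k) → ConsecIn (X.drop k) c := by
    intro c hc hmem
    have hdecomp : X = X.take k ++ X.drop k ++ [] := by simp
    refine consecIn_restrict (l := X.take k) (r := []) (by simpa using (hdecomp ▸ hX.1)) ?_ hmem
    rcases hc with hc | hc
    · exact hdecomp ▸ hX.2.2.1 c hc
    · exact hdecomp ▸ hX.2.2.2 c hc
  have consZ' : ∀ c, (I.A c ∨ I.B c) → (∀ a ∈ c, a ∈ X'.drop k) → ConsecIn (X'.drop k) c := by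
    intro c hc hmem
    have hdecomp : X' = X'.take k ++ X'.drop k ++ [] := by simp
    refine consecIn_restrict (l := X'.take k) (r := []) (by simpa using (hdecomp ▸ hX'.1)) ?_ hmem
    rcases hc with hc | hc
    · exact hdecomp ▸ hX'.2.2.1 c hc
    · exact hdecomp ▸ hX'.2.2.2 c hc
  have hdropne : X.drop k ≠ [] := by
    intro hc
    have := congrArg List.length hc
    simp at this; omega
  have hdropne' : X'.drop k ≠ [] := by
    intro hc
    have := congrArg List.length hc
    simp at this; omega
  have Hbase : ∀ w, PB (X.drop k) {w} → PB (X'.drop k) {w} → False := by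
    intro w h1 h2
    have e1 : (X.drop k).head hdropne = w := pb_singleton_head h1 hdropne
    have e2 : (X'.drop k).head hdropne' = w := pb_singleton_head h2 hdropne'
    rw [List.head_drop] at e1 e2
    exact hne (e1.trans e2.symm)
  have Hsm : ∀ (h₀ : Finset ℕ), (∀ a ∈ h₀, a ∉ X.take k) →
      ∀ c, I.A c → I.B c → 2 ≤ c.card → c ⊆ h₀ → False := by
    intro h₀ hout c h1 h2 h3 h4
    have := Irr c h1 h2 h3
    exact hout X[0] (h4 (this ▸ (hX.2.1 _).1 (List.getElem_mem _))) hx0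
  by_cases heqAB : sA = sB
  · have hcard : 2 ≤ sA.card := Finset.one_lt_card.2 ⟨X[k], hkA, X'[k], hk'A, hne⟩
    have := Irr sA hsA (heqAB ▸ hsB) hcard
    exact houtA X[0] (this ▸ (hX.2.1 _).1 (List.getElem_mem _)) hx0
  · rcases pb_subset_total pbA pbB with hsub | hsub
    · have hsub' : sA ⊆ sB := fun a ha => hsub a ha
      exact descent sB.card I.A I.B (X.drop k) (X'.drop k) hdZ hdZ'
        I.splitB (fun c hc => consZ c (Or.inr hc)) (fun c hc => consZ' c (Or.inr hc))
        sB (Hsm sB houtB) (fun c h1 h2 => Hsm sB houtB c h2 h1) Hbase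
        I.splitA (fun c hc => consZ c (Or.inl hc)) (fun c hc => consZ' c (Or.inl hc))
        sA sB le_rfl ⟨X[k], hkA⟩
        (Finset.ssubset_iff_subset_ne.2 ⟨hsub', heqAB⟩) le_rfl hsA hsB
        pbA pbA' pbB pbB'
    · have hsub' : sB ⊆ sA := fun a ha => hsub a ha
      exact descent sA.card I.B I.A (X.drop k) (X'.drop k) hdZ hdZ'
        I.splitA (fun c hc => consZ c (Or.inl hc)) (fun c hc => consZ' c (Or.inl hc))
        sA (fun c h1 h2 => Hsm sA houtA c h2 h1) (Hsm sA houtA) Hbase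
        I.splitB (fun c hc => consZ c (Or.inr hc)) (fun c hc => consZ' c (Or.inr hc))
        sB sA le_rfl ⟨X[k], hkB⟩
        (Finset.ssubset_iff_subset_ne.2 ⟨hsub', fun he => heqAB he.symm⟩) le_rfl hsB hsA
        pbB pbB' pbA pbA'

/-- Two planar layouts of an irreducible instance with the same head coincide. -/
lemma zipper (I : Lam) (Irr : ∀ c, I.A c → I.B c → 2 ≤ c.card → c = I.V)
    {X X' : List ℕ} (hX : I.Planar X) (hX' : I.Planar X')
    (hneX : X ≠ []) (hneX' : X' ≠ [])
    (hhead : X.head hneX = X'.head hneX') : X = X' := by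
  have hlen : X.length = X'.length := by
    have h1 : X.toFinset = I.V := by ext a; simp [hX.2.1 a]
    have h2 : X'.toFinset = I.V := by ext a; simp [hX'.2.1 a]
    rw [← List.toFinset_card_of_nodup hX.1, ← List.toFinset_card_of_nodup hX'.1, h1, h2]
  have htake : ∀ j, j ≤ X.length → X.take j = X'.take j := by
    intro j
    induction j with
    | zero => simp
    | succ j ih =>
      intro hj
      have hjX : j < X.length := by omega
      have hjX' : j < X'.length := by omega
      have h1 := ih (by omega)
      rw [List.take_succ, List.take_succ, h1, List.getElem?_eq_getElem hjX,
        List.getElem?_eq_getElem hjX']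
      rcases Nat.eq_zero_or_pos j with rfl | hj0
      · have e1 : X[0] = X.head hneX := (List.head_eq_getElem (l := X) hneX).symm
        have e2 : X'[0] = X'.head hneX' := (List.head_eq_getElem (l := X') hneX').symm
        rw [e1, e2, hhead]
      · rw [force I Irr hX hX' hj0 hjX hjX' h1]
  have := htake X.length le_rfl
  rwa [List.take_length, hlen, List.take_length] at this

/-- Rigidity for irreducible instances: there are at most two planar layouts. -/
lemma rigid (I : Lam) (Irr : ∀ c, I.A c → I.B c → 2 ≤ c.card → c = I.V)
    {X X' : List ℕ} (hX : I.Planar X) (hX' : I.Planar X')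
    (hV : I.V.Nonempty) : X' = X ∨ X' = X.reverse := by
  obtain ⟨v, hv⟩ := hV
  have hneX : X ≠ [] := by
    intro hc
    exact (List.not_mem_nil (a := v)) (hc ▸ (hX.2.1 v).2 hv)
  have hneX' : X' ≠ [] := by
    intro hc
    exact (List.not_mem_nil (a := v)) (hc ▸ (hX'.2.1 v).2 hv)
  rcases head_or_last I Irr hX hX' hneX hneX' with hh | hh
  · exact Or.inl (zipper I Irr hX' hX hneX' hneX hh)
  · have hrev : I.Planar X.reverse := Lam.planar_reverse hX
    have hrne : X.reverse ≠ [] := by simpa using hneX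
    have hhead : X'.head hneX' = X.reverse.head hrne := by
      rw [List.head_reverse]; exact hh
    exact Or.inr (zipper I Irr hX' hrev hneX' hrne hhead)

end Rigid

section Quot

/-- Contraction of the common clade `c` to the point `x₀`. -/
def qmap (c : Finset ℕ) (x₀ : ℕ) (a : Finset ℕ) : Finset ℕ :=
  if (a ∩ c).Nonempty then insert x₀ (a \ c) else a

/-- Contraction of a layout. -/
def kmap (c : Finset ℕ) (x₀ : ℕ) (X : List ℕ) : List ℕ :=
  X.filter (fun t => decide (t ∉ c ∨ t = x₀))

variable {c : Finset ℕ} {x₀ : ℕ}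

lemma qmap_of_inter_empty {a : Finset ℕ} (h : a ∩ c = ∅) : qmap c x₀ a = a := by
  rw [qmap, if_neg]; rw [h]; exact fun hc => Finset.not_nonempty_empty hc

lemma qmap_of_subset (hx₀ : x₀ ∈ c) {a : Finset ℕ} (hne : a.Nonempty) (h : a ⊆ c) :
    qmap c x₀ a = {x₀} := by
  rw [qmap, if_pos (by rwa [Finset.inter_eq_left.2 h]),
    Finset.sdiff_eq_empty_iff_subset.2 h]
  rfl

lemma qmap_of_superset (hx₀ : x₀ ∈ c) {a : Finset ℕ} (h : c ⊆ a) :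
    qmap c x₀ a = insert x₀ (a \ c) := by
  rw [qmap, if_pos ⟨x₀, Finset.mem_inter.2 ⟨h hx₀, hx₀⟩⟩]

lemma qmap_mono (hx₀ : x₀ ∈ c) {a b : Finset ℕ} (h : a ⊆ b) :
    qmap c x₀ a ⊆ qmap c x₀ b := by
  unfold qmap
  by_cases ha : (a ∩ c).Nonempty
  · have hb : (b ∩ c).Nonempty := ha.mono (Finset.inter_subset_inter h subset_rfl)
    rw [if_pos ha, if_pos hb]
    exact Finset.insert_subset_insert _ (Finset.sdiff_subset_sdiff h subset_rfl)
  · rw [if_neg ha]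
    by_cases hb : (b ∩ c).Nonempty
    · rw [if_pos hb]
      intro t ht
      have htc : t ∉ c := fun hc =>
        ha ⟨t, Finset.mem_inter.2 ⟨ht, hc⟩⟩
      exact Finset.mem_insert_of_mem (Finset.mem_sdiff.2 ⟨h ht, htc⟩)
    · rw [if_neg hb]; exact h

/-- Laminarity is preserved by contraction. -/
lemma qmap_lam (hx₀ : x₀ ∈ c) (F : Finset ℕ → Prop)
    (lamF : ∀ a b, F a → F b → a ⊆ b ∨ b ⊆ a ∨ Disjoint a b) (hFc : F c)
    {a b : Finset ℕ} (hFa : F a) (hFb : F b) :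
    qmap c x₀ a ⊆ qmap c x₀ b ∨ qmap c x₀ b ⊆ qmap c x₀ a ∨
      Disjoint (qmap c x₀ a) (qmap c x₀ b) := by
  rcases lamF a b hFa hFb with h | h | h
  · exact Or.inl (qmap_mono hx₀ h)
  · exact Or.inr (Or.inl (qmap_mono hx₀ h))
  · by_cases ha : (a ∩ c).Nonempty
    · by_cases hb : (b ∩ c).Nonempty
      · -- both sets meet c : both are contained in c
        have hac : a ⊆ c := by
          rcases lamF a c hFa hFc with h' | h' | h'
          · exact h'
          · exfalso
            obtain ⟨t, ht⟩ := hb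
            rw [Finset.mem_inter] at ht
            exact Finset.disjoint_left.1 h (h' ht.2) ht.1
          · exact absurd ha (by rw [Finset.disjoint_iff_inter_eq_empty.1 h']; simp)
        have hbc : b ⊆ c := by
          rcases lamF b c hFb hFc with h' | h' | h'
          · exact h'
          · exfalso
            obtain ⟨t, ht⟩ := ha
            rw [Finset.mem_inter] at ht
            exact Finset.disjoint_left.1 h ht.1 (h' ht.2)
          · exact absurd hb (by rw [Finset.disjoint_iff_inter_eq_empty.1 h']; simp)
        rw [qmap_of_subset hx₀ (by rwa [Finset.inter_eq_left.2 hac] at ha) hac,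
          qmap_of_subset hx₀ (by rwa [Finset.inter_eq_left.2 hbc] at hb) hbc]
        exact Or.inl subset_rfl
      · rw [qmap, if_pos ha, qmap, if_neg hb]
        refine Or.inr (Or.inr (Finset.disjoint_left.2 ?_))
        intro t ht htb
        rcases Finset.mem_insert.1 ht with rfl | ht'
        · exact hb ⟨t, Finset.mem_inter.2 ⟨htb, hx₀⟩⟩
        · exact Finset.disjoint_left.1 h (Finset.mem_sdiff.1 ht').1 htb
    · by_cases hb : (b ∩ c).Nonempty
      · rw [qmap, if_neg ha, qmap, if_pos hb]
        refine Or.inr (Or.inr (Finset.disjoint_left.2 ?_))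
        intro t ht htb
        rcases Finset.mem_insert.1 htb with h' | ht'
        · exact ha ⟨t, Finset.mem_inter.2 ⟨ht, h' ▸ hx₀⟩⟩
        · exact Finset.disjoint_left.1 h ht (Finset.mem_sdiff.1 ht').1
      · rw [qmap_of_inter_empty (Finset.not_nonempty_iff_eq_empty.1 ha),
          qmap_of_inter_empty (Finset.not_nonempty_iff_eq_empty.1 hb)]
        exact Or.inr (Or.inr h)

/-- Binary splitting is preserved by contraction. -/
lemma qmap_split (hx₀ : x₀ ∈ c) (F : Finset ℕ → Prop)
    (lamF : ∀ a b, F a → F b → a ⊆ b ∨ b ⊆ a ∨ Disjoint a b)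
    (neF : ∀ a, F a → a.Nonempty)
    (splitF : ∀ a, F a → 2 ≤ a.card →
      ∃ a₁ a₂, F a₁ ∧ F a₂ ∧ Disjoint a₁ a₂ ∧ a₁ ∪ a₂ = a ∧ a₁.Nonempty ∧ a₂.Nonempty)
    (hFc : F c) {a : Finset ℕ} (hFa : F a) (hcard : 2 ≤ (qmap c x₀ a).card) :
    ∃ s₁ s₂, (∃ a₁, F a₁ ∧ s₁ = qmap c x₀ a₁) ∧ (∃ a₂, F a₂ ∧ s₂ = qmap c x₀ a₂) ∧
      Disjoint s₁ s₂ ∧ s₁ ∪ s₂ = qmap c x₀ a ∧ s₁.Nonempty ∧ s₂.Nonempty := by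
  have hnota : ¬ a ⊆ c := by
    intro h
    rw [qmap_of_subset hx₀ (neF a hFa) h] at hcard
    simp at hcard
  by_cases ha : (a ∩ c).Nonempty
  · -- c ⊊ a
    have hca : c ⊆ a := by
      rcases lamF a c hFa hFc with h' | h' | h'
      · exact absurd h' hnota
      · exact h'
      · exact absurd ha (by rw [Finset.disjoint_iff_inter_eq_empty.1 h']; simp)
    have hcane : c ≠ a := fun h => hnota (h ▸ subset_rfl)
    have hacard : 2 ≤ a.card := by
      have h1 : 1 ≤ c.card := Finset.card_pos.2 ⟨x₀, hx₀⟩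
      have h2 : c.card < a.card := Finset.card_lt_card (Finset.ssubset_iff_subset_ne.2 ⟨hca, hcane⟩)
      omega
    obtain ⟨a₁, a₂, hF1, hF2, hdis, hun, hne1, hne2⟩ := splitF a hFa hacard
    have hsub1 : a₁ ⊆ a := hun ▸ Finset.subset_union_left
    have hsub2 : a₂ ⊆ a := hun ▸ Finset.subset_union_right
    -- c is contained in one of the children
    have hkey : c ⊆ a₁ ∨ c ⊆ a₂ := by
      rcases lamF c a₁ hFc hF1 with h' | h' | h'
      · exact Or.inl h'
      · -- a₁ ⊆ c
        rcases lamF c a₂ hFc hF2 with h'' | h'' | h''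
        · exact Or.inr h''
        · -- a₂ ⊆ c as well : then a ⊆ c, contradiction
          exact absurd (by rw [← hun]; exact Finset.union_subset h' h'' : a ⊆ c) hnota
        · -- c disjoint from a₂ : c ⊆ a₁
          refine Or.inl (fun t ht => ?_)
          rcases Finset.mem_union.1 (hun ▸ hca ht : t ∈ a₁ ∪ a₂) with h3 | h3
          · exact h3
          · exact absurd h3 (fun h4 => Finset.disjoint_left.1 h'' ht h4)
      · -- c disjoint from a₁ : c ⊆ a₂
        refine Or.inr (fun t ht => ?_)
        rcases Finset.mem_union.1 (hun ▸ hca ht : t ∈ a₁ ∪ a₂) with h3 | h3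
        · exact absurd h3 (fun h4 => Finset.disjoint_left.1 h' ht h4)
        · exact h3
    -- by symmetry assume c ⊆ a₁
    have main : ∀ b₁ b₂, F b₁ → F b₂ → Disjoint b₁ b₂ → b₁ ∪ b₂ = a →
        b₁.Nonempty → b₂.Nonempty → c ⊆ b₁ →
        ∃ s₁ s₂, (∃ d, F d ∧ s₁ = qmap c x₀ d) ∧ (∃ d, F d ∧ s₂ = qmap c x₀ d) ∧
          Disjoint s₁ s₂ ∧ s₁ ∪ s₂ = qmap c x₀ a ∧ s₁.Nonempty ∧ s₂.Nonempty := by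
      intro b₁ b₂ hG1 hG2 hd hu hn1 hn2 hcb
      have hb2c : b₂ ∩ c = ∅ := by
        rw [Finset.eq_empty_iff_forall_notMem]
        intro t ht
        rw [Finset.mem_inter] at ht
        exact Finset.disjoint_left.1 hd (hcb ht.2) ht.1
      refine ⟨qmap c x₀ b₁, qmap c x₀ b₂, ⟨b₁, hG1, rfl⟩, ⟨b₂, hG2, rfl⟩, ?_, ?_, ?_, ?_⟩
      · rw [qmap_of_superset hx₀ hcb, qmap_of_inter_empty hb2c]
        refine Finset.disjoint_left.2 (fun t ht htb => ?_)
        rcases Finset.mem_insert.1 ht with rfl | ht'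
        · have : t ∈ b₂ ∩ c := Finset.mem_inter.2 ⟨htb, hx₀⟩
          rw [hb2c] at this; simpa using this
        · exact Finset.disjoint_left.1 hd (Finset.mem_sdiff.1 ht').1 htb
      · rw [qmap_of_superset hx₀ hcb, qmap_of_inter_empty hb2c,
          qmap_of_superset hx₀ (hu ▸ hcb.trans (Finset.subset_union_left))]
        ext t
        simp only [Finset.mem_union, Finset.mem_insert, Finset.mem_sdiff, ← hu]
        constructor
        · rintro ((rfl | ⟨h1, h2⟩) | h1)
          · exact Or.inl rfl
          · exact Or.inr ⟨Or.inl h1, h2⟩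
          · refine Or.inr ⟨Or.inr h1, fun hc2 => ?_⟩
            have : t ∈ b₂ ∩ c := Finset.mem_inter.2 ⟨h1, hc2⟩
            rw [hb2c] at this; simpa using this
        · rintro (rfl | ⟨h1 | h1, h2⟩)
          · exact Or.inl (Or.inl rfl)
          · exact Or.inl (Or.inr ⟨h1, h2⟩)
          · exact Or.inr h1
      · rw [qmap_of_superset hx₀ hcb]; exact ⟨x₀, Finset.mem_insert_self _ _⟩
      · rw [qmap_of_inter_empty hb2c]; exact hn2
    rcases hkey with h' | h'
    · exact main a₁ a₂ hF1 hF2 hdis hun hne1 hne2 h'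
    · exact main a₂ a₁ hF2 hF1 hdis.symm (by rw [Finset.union_comm]; exact hun) hne2 hne1 h'
  · -- a misses c : nothing changes
    have ha' : a ∩ c = ∅ := Finset.not_nonempty_iff_eq_empty.1 ha
    rw [qmap_of_inter_empty ha'] at hcard ⊢
    obtain ⟨a₁, a₂, hF1, hF2, hdis, hun, hne1, hne2⟩ := splitF a hFa hcard
    have h1 : a₁ ∩ c = ∅ := by
      rw [Finset.eq_empty_iff_forall_notMem]
      intro t ht
      rw [Finset.mem_inter] at ht
      have : t ∈ a ∩ c := Finset.mem_inter.2 ⟨(hun ▸ Finset.subset_union_left) ht.1, ht.2⟩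
      rw [ha'] at this; simpa using this
    have h2 : a₂ ∩ c = ∅ := by
      rw [Finset.eq_empty_iff_forall_notMem]
      intro t ht
      rw [Finset.mem_inter] at ht
      have : t ∈ a ∩ c := Finset.mem_inter.2 ⟨(hun ▸ Finset.subset_union_right) ht.1, ht.2⟩
      rw [ha'] at this; simpa using this
    exact ⟨a₁, a₂, ⟨a₁, hF1, (qmap_of_inter_empty h1).symm⟩,
      ⟨a₂, hF2, (qmap_of_inter_empty h2).symm⟩, hdis, hun, hne1, hne2⟩

/-- The quotient instance obtained by contracting the common clade `c` to `x₀`. -/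
def quotLam (I : Lam) (c : Finset ℕ) (x₀ : ℕ) (hx₀ : x₀ ∈ c)
    (hA : I.A c) (hB : I.B c) : Lam where
  V := insert x₀ (I.V \ c)
  A := fun s => ∃ a, I.A a ∧ s = qmap c x₀ a
  B := fun s => ∃ a, I.B a ∧ s = qmap c x₀ a
  rootA := ⟨I.V, I.rootA, by
    rw [qmap_of_superset hx₀ (I.subA c hA)]⟩
  rootB := ⟨I.V, I.rootB, by
    rw [qmap_of_superset hx₀ (I.subB c hB)]⟩
  subA := by
    rintro s ⟨a, ha, rfl⟩
    have hsub := I.subA a ha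
    have := qmap_mono (c := c) (x₀ := x₀) hx₀ hsub
    rwa [qmap_of_superset hx₀ (I.subA c hA)] at this
  subB := by
    rintro s ⟨a, ha, rfl⟩
    have hsub := I.subB a ha
    have := qmap_mono (c := c) (x₀ := x₀) hx₀ hsub
    rwa [qmap_of_superset hx₀ (I.subB c hB)] at this
  neA := by
    rintro s ⟨a, ha, rfl⟩
    unfold qmap
    split
    · exact ⟨x₀, Finset.mem_insert_self _ _⟩
    · exact I.neA a ha
  neB := by
    rintro s ⟨a, ha, rfl⟩
    unfold qmap
    split
    · exact ⟨x₀, Finset.mem_insert_self _ _⟩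
    · exact I.neB a ha
  splitA := by
    rintro s ⟨a, ha, rfl⟩ hcard
    exact qmap_split hx₀ I.A I.lamA I.neA I.splitA hA ha hcard
  splitB := by
    rintro s ⟨a, ha, rfl⟩ hcard
    exact qmap_split hx₀ I.B I.lamB I.neB I.splitB hB ha hcard
  lamA := by
    rintro s t ⟨a, ha, rfl⟩ ⟨b, hb, rfl⟩
    exact qmap_lam hx₀ I.A I.lamA hA ha hb
  lamB := by
    rintro s t ⟨a, ha, rfl⟩ ⟨b, hb, rfl⟩
    exact qmap_lam hx₀ I.B I.lamB hB ha hb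

/-- Common clades of the quotient of size at least 2 come from common clades. -/
lemma quot_common (I : Lam) {c : Finset ℕ} {x₀ : ℕ} (hx₀ : x₀ ∈ c)
    (hA : I.A c) (hB : I.B c) (hcard : 2 ≤ c.card) {s : Finset ℕ}
    (hsA : ∃ a, I.A a ∧ s = qmap c x₀ a) (hsB : ∃ b, I.B b ∧ s = qmap c x₀ b)
    (hs : 2 ≤ s.card) :
    ∃ d, I.A d ∧ I.B d ∧ 2 ≤ d.card ∧ s = qmap c x₀ d ∧ (d ∩ c = ∅ ∨ c ⊆ d) := by
  obtain ⟨a, haA, rfl⟩ := hsA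
  obtain ⟨b, hbB, hab⟩ := hsB
  have hcase : ∀ (F : Finset ℕ → Prop), F c →
      (∀ u v, F u → F v → u ⊆ v ∨ v ⊆ u ∨ Disjoint u v) →
      (∀ u, F u → u.Nonempty) → ∀ e, F e → 2 ≤ (qmap c x₀ e).card →
      e ∩ c = ∅ ∨ c ⊆ e := by
    intro F hFc lamF neF e hFe hce
    have hnote : ¬ e ⊆ c := by
      intro h
      rw [qmap_of_subset hx₀ (neF e hFe) h] at hce
      simp at hce
    by_cases he : (e ∩ c).Nonempty
    · rcases lamF e c hFe hFc with h' | h' | h'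
      · exact absurd h' hnote
      · exact Or.inr h'
      · exact absurd he (by rw [Finset.disjoint_iff_inter_eq_empty.1 h']; simp)
    · exact Or.inl (Finset.not_nonempty_iff_eq_empty.1 he)
  have hca := hcase I.A hA I.lamA I.neA a haA hs
  have hcb := hcase I.B hB I.lamB I.neB b hbB (hab ▸ hs)
  rcases hca with ha | ha
  · rcases hcb with hb | hb
    · -- both miss c : equal sets
      rw [qmap_of_inter_empty ha] at hab ⊢
      rw [qmap_of_inter_empty hb] at hab
      subst hab
      exact ⟨a, haA, hbB, by rwa [qmap_of_inter_empty ha] at hs,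
        (qmap_of_inter_empty ha).symm, Or.inl ha⟩
    · -- a misses c, c ⊆ b : x₀ on one side only
      exfalso
      rw [qmap_of_inter_empty ha] at hab
      rw [qmap_of_superset hx₀ hb] at hab
      have : x₀ ∈ a := by rw [hab]; exact Finset.mem_insert_self _ _
      have : x₀ ∈ a ∩ c := Finset.mem_inter.2 ⟨this, hx₀⟩
      rw [ha] at this; simpa using this
  · rcases hcb with hb | hb
    · exfalso
      rw [qmap_of_inter_empty hb] at hab
      rw [qmap_of_superset hx₀ ha] at hab
      have : x₀ ∈ b := by rw [← hab]; exact Finset.mem_insert_self _ _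
      have : x₀ ∈ b ∩ c := Finset.mem_inter.2 ⟨this, hx₀⟩
      rw [hb] at this; simpa using this
    · -- c ⊆ a and c ⊆ b : a = b
      have heq : a = b := by
        rw [qmap_of_superset hx₀ ha, qmap_of_superset hx₀ hb] at hab
        have h1 : a \ c = b \ c := by
          have hx₀a : x₀ ∉ a \ c := by simp [hx₀]
          have hx₀b : x₀ ∉ b \ c := by simp [hx₀]
          ext t
          constructor
          · intro ht
            have : t ∈ insert x₀ (b \ c) := hab ▸ Finset.mem_insert_of_mem ht
            rcases Finset.mem_insert.1 this with rfl | h'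
            · exact absurd ht hx₀a
            · exact h'
          · intro ht
            have : t ∈ insert x₀ (a \ c) := hab ▸ Finset.mem_insert_of_mem ht
            rcases Finset.mem_insert.1 this with rfl | h'
            · exact absurd ht hx₀b
            · exact h'
        have h2 : a = (a \ c) ∪ c := by
          rw [Finset.sdiff_union_self_eq_union, Finset.union_eq_left.2 ha]
        have h3 : b = (b \ c) ∪ c := by
          rw [Finset.sdiff_union_self_eq_union, Finset.union_eq_left.2 hb]
        rw [h2, h3, h1]
      subst heq
      refine ⟨a, haA, hbB, ?_, rfl, Or.inr ha⟩
      calc 2 ≤ c.card := hcard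
      _ ≤ a.card := Finset.card_le_card ha

lemma nodup_middle {l m r : List ℕ} (h : (l ++ m ++ r).Nodup) : m.Nodup := by
  rw [List.append_assoc, List.nodup_append] at h
  exact (List.nodup_append.1 h.2.1).1

lemma kmap_mem {X : List ℕ} {t : ℕ} :
    t ∈ kmap c x₀ X ↔ t ∈ X ∧ (t ∉ c ∨ t = x₀) := by
  rw [kmap, List.mem_filter, decide_eq_true_eq]

lemma kmap_nodup {X : List ℕ} (h : X.Nodup) : (kmap c x₀ X).Nodup :=
  h.filter _

lemma filter_eq_singleton {w : List ℕ} (hnd : w.Nodup) {y : ℕ} (hy : y ∈ w)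
    {p : ℕ → Bool} (hp : ∀ t ∈ w, p t = true ↔ t = y) : w.filter p = [y] := by
  induction w with
  | nil => simp at hy
  | cons a w ih =>
    rcases List.mem_cons.1 hy with rfl | hy'
    · have hpa : p y = true := (hp y (List.mem_cons_self)).2 rfl
      have hrest : w.filter p = [] := by
        refine List.filter_eq_nil_iff.2 (fun t ht => ?_)
        intro hpt
        have := (hp t (List.mem_cons_of_mem _ ht)).1 hpt
        subst this
        exact (List.nodup_cons.1 hnd).1 ht
      simp [List.filter_cons, hpa, hrest]
    · have hpa : p a = false := by
        by_contra hc
        have := (hp a (List.mem_cons_self)).1 (by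
          cases h' : p a
          · exact absurd h' hc
          · rfl)
        subst this
        exact (List.nodup_cons.1 hnd).1 hy'
      rw [List.filter_cons, if_neg (by simp [hpa])]
      exact ih (List.nodup_cons.1 hnd).2 hy' (fun t ht => hp t (List.mem_cons_of_mem _ ht))

lemma kmap_block (hx₀ : x₀ ∈ c) {Z u w v : List ℕ} (hZ : Z.Nodup)
    (hdec : Z = u ++ w ++ v) (hw : ∀ t, t ∈ w ↔ t ∈ c) :
    kmap c x₀ Z = u ++ [x₀] ++ v := by
  have hnd := nodup_parts (hdec ▸ hZ)
  have hu : kmap c x₀ u = u := by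
    rw [kmap]
    refine List.filter_eq_self.2 (fun t ht => ?_)
    rw [decide_eq_true_eq]
    exact Or.inl (fun hc => hnd.1 t ht ((hw t).2 hc))
  have hv : kmap c x₀ v = v := by
    rw [kmap]
    refine List.filter_eq_self.2 (fun t ht => ?_)
    rw [decide_eq_true_eq]
    exact Or.inl (fun hc => hnd.2.2 t ((hw t).2 hc) ht)
  have hwnd : w.Nodup := nodup_middle (hdec ▸ hZ)
  have hww : kmap c x₀ w = [x₀] := by
    rw [kmap]
    refine filter_eq_singleton hwnd ((hw x₀).2 hx₀) (fun t ht => ?_)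
    rw [decide_eq_true_eq]
    constructor
    · rintro (h | h)
      · exact absurd ((hw t).1 ht) h
      · exact h
    · rintro rfl; exact Or.inr rfl
  rw [hdec, kmap, List.filter_append, List.filter_append, ← kmap, ← kmap, ← kmap, hu, hv, hww]

lemma kmap_memEq {m : List ℕ} {dd : Finset ℕ} (hx₀ : x₀ ∈ c)
    (hm : ∀ t, t ∈ m ↔ t ∈ dd) (hdc : dd ∩ c = ∅ ∨ c ⊆ dd) :
    ∀ t, t ∈ kmap c x₀ m ↔ t ∈ qmap c x₀ dd := by
  intro t
  rw [kmap_mem, hm t]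
  rcases hdc with h | h
  · rw [qmap_of_inter_empty h]
    constructor
    · rintro ⟨h1, _⟩; exact h1
    · intro h1
      refine ⟨h1, Or.inl (fun hc => ?_)⟩
      have : t ∈ dd ∩ c := Finset.mem_inter.2 ⟨h1, hc⟩
      rw [h] at this; simpa using this
  · rw [qmap_of_superset hx₀ h]
    constructor
    · rintro ⟨h1, h2 | h2⟩
      · exact Finset.mem_insert_of_mem (Finset.mem_sdiff.2 ⟨h1, h2⟩)
      · exact h2 ▸ Finset.mem_insert_self _ _
    · intro h1
      rcases Finset.mem_insert.1 h1 with rfl | h2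
      · exact ⟨h hx₀, Or.inr rfl⟩
      · exact ⟨(Finset.mem_sdiff.1 h2).1, Or.inl (Finset.mem_sdiff.1 h2).2⟩

lemma kmap_flip (hx₀ : x₀ ∈ c) {dd : Finset ℕ} {X X' : List ℕ}
    (h : FlipBlock dd X X') (hdc : dd ∩ c = ∅ ∨ c ⊆ dd) :
    FlipBlock (qmap c x₀ dd) (kmap c x₀ X) (kmap c x₀ X') := by
  obtain ⟨l, m, r, rfl, hm, rfl⟩ := h
  refine ⟨kmap c x₀ l, kmap c x₀ m, kmap c x₀ r, ?_, kmap_memEq hx₀ hm hdc, ?_⟩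
  · rw [kmap, List.filter_append, List.filter_append]; rfl
  · rw [kmap, List.filter_append, List.filter_append, List.filter_reverse]; rfl

/-- Contraction sends planar layouts to planar layouts of the quotient. -/
lemma quot_planar (I : Lam) (hx₀ : x₀ ∈ c) (hA : I.A c) (hB : I.B c)
    {X : List ℕ} (hX : I.Planar X) :
    (quotLam I c x₀ hx₀ hA hB).Planar (kmap c x₀ X) := by
  have hmem : ∀ t, t ∈ kmap c x₀ X ↔ t ∈ insert x₀ (I.V \ c) := by
    intro t
    rw [kmap_mem]
    constructor
    · rintro ⟨h1, h2 | h2⟩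
      · exact Finset.mem_insert_of_mem (Finset.mem_sdiff.2 ⟨(hX.2.1 t).1 h1, h2⟩)
      · exact h2 ▸ Finset.mem_insert_self _ _
    · intro h1
      rcases Finset.mem_insert.1 h1 with rfl | h2
      · exact ⟨(hX.2.1 t).2 (I.subA c hA hx₀), Or.inr rfl⟩
      · exact ⟨(hX.2.1 t).2 (Finset.mem_sdiff.1 h2).1, Or.inl (Finset.mem_sdiff.1 h2).2⟩
  have hclade : ∀ (F : Finset ℕ → Prop), F c →
      (∀ u v, F u → F v → u ⊆ v ∨ v ⊆ u ∨ Disjoint u v) →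
      (∀ u, F u → u.Nonempty) → (∀ u, F u → ConsecIn X u) →
      ∀ a, F a → ConsecIn (kmap c x₀ X) (qmap c x₀ a) := by
    intro F hFc lamF neF consF a hFa
    by_cases ha : (a ∩ c).Nonempty
    · by_cases hac : a ⊆ c
      · rw [qmap_of_subset hx₀ (neF a hFa) hac]
        refine consecIn_singleton ((hmem x₀).2 (Finset.mem_insert_self _ _))
      · have hca : c ⊆ a := by
          rcases lamF a c hFa hFc with h' | h' | h'
          · exact absurd h' hac
          · exact h'
          · exact absurd ha (by rw [Finset.disjoint_iff_inter_eq_empty.1 h']; simp)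
        obtain ⟨l, m, r, hdec, hm⟩ := consF a hFa
        refine ⟨kmap c x₀ l, kmap c x₀ m, kmap c x₀ r, ?_, kmap_memEq hx₀ hm (Or.inr hca)⟩
        rw [hdec, kmap, List.filter_append, List.filter_append]; rfl
    · obtain ⟨l, m, r, hdec, hm⟩ := consF a hFa
      refine ⟨kmap c x₀ l, kmap c x₀ m, kmap c x₀ r, ?_,
        kmap_memEq hx₀ hm (Or.inl (Finset.not_nonempty_iff_eq_empty.1 ha))⟩
      rw [hdec, kmap, List.filter_append, List.filter_append]; rfl
  refine ⟨kmap_nodup hX.1, hmem, ?_, ?_⟩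
  · rintro s ⟨a, haF, rfl⟩
    exact hclade I.A hA I.lamA I.neA (fun u hu => hX.2.2.1 u hu) a haF
  · rintro s ⟨a, haF, rfl⟩
    exact hclade I.B hB I.lamB I.neB (fun u hu => hX.2.2.2 u hu) a haF

/-- The instance induced inside a common clade. -/
def insideLam (I : Lam) (c : Finset ℕ) (hA : I.A c) (hB : I.B c) : Lam where
  V := c
  A := fun a => I.A a ∧ a ⊆ c
  B := fun a => I.B a ∧ a ⊆ c
  rootA := ⟨hA, subset_rfl⟩
  rootB := ⟨hB, subset_rfl⟩
  subA := fun _ ha => ha.2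
  subB := fun _ ha => ha.2
  neA := fun a ha => I.neA a ha.1
  neB := fun a ha => I.neB a ha.1
  splitA := by
    rintro a ⟨ha, hsub⟩ hcard
    obtain ⟨a₁, a₂, h1, h2, h3, h4, h5, h6⟩ := I.splitA a ha hcard
    exact ⟨a₁, a₂, ⟨h1, (h4 ▸ Finset.subset_union_left).trans hsub⟩,
      ⟨h2, (h4 ▸ Finset.subset_union_right).trans hsub⟩, h3, h4, h5, h6⟩
  splitB := by
    rintro a ⟨ha, hsub⟩ hcard
    obtain ⟨a₁, a₂, h1, h2, h3, h4, h5, h6⟩ := I.splitB a ha hcard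
    exact ⟨a₁, a₂, ⟨h1, (h4 ▸ Finset.subset_union_left).trans hsub⟩,
      ⟨h2, (h4 ▸ Finset.subset_union_right).trans hsub⟩, h3, h4, h5, h6⟩
  lamA := fun a b ha hb => I.lamA a b ha.1 hb.1
  lamB := fun a b ha hb => I.lamB a b ha.1 hb.1

lemma inside_planar (I : Lam) (hA : I.A c) (hB : I.B c) {X l m r : List ℕ}
    (hX : I.Planar X) (hdec : X = l ++ m ++ r) (hm : ∀ t, t ∈ m ↔ t ∈ c) :
    (insideLam I c hA hB).Planar m := by
  refine ⟨nodup_middle (hdec ▸ hX.1), hm, ?_, ?_⟩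
  · rintro a ⟨ha, hsub⟩
    exact consecIn_restrict (hdec ▸ hX.1) (hdec ▸ hX.2.2.1 a ha)
      (fun t ht => (hm t).2 (hsub ht))
  · rintro a ⟨ha, hsub⟩
    exact consecIn_restrict (hdec ▸ hX.1) (hdec ▸ hX.2.2.2 a ha)
      (fun t ht => (hm t).2 (hsub ht))

lemma eq_of_append_singleton {x₀ : ℕ} :
    ∀ {u : List ℕ} {v l r : List ℕ}, u ++ x₀ :: v = l ++ x₀ :: r →
      x₀ ∉ u → x₀ ∉ l → u = l ∧ v = r := by
  intro u
  induction u with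
  | nil =>
    intro v l r h hu hl
    cases l with
    | nil =>
      simp only [List.nil_append, List.cons.injEq] at h
      exact ⟨rfl, h.2⟩
    | cons a l' =>
      simp only [List.nil_append, List.cons_append, List.cons.injEq] at h
      exfalso
      apply hl
      rw [h.1]
      exact List.mem_cons_self
  | cons b u' ih =>
    intro v l r h hu hl
    cases l with
    | nil =>
      simp only [List.cons_append, List.nil_append, List.cons.injEq] at h
      exfalso
      apply hu
      rw [← h.1]
      exact List.mem_cons_self
    | cons a l' =>
      simp only [List.cons_append, List.cons.injEq] at h
      obtain ⟨rfl, h2⟩ := h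
      have := ih h2 (fun hc => hu (List.mem_cons_of_mem _ hc))
        (fun hc => hl (List.mem_cons_of_mem _ hc))
      exact ⟨by rw [this.1], this.2⟩

lemma lift_quot (I : Lam) (hx₀ : x₀ ∈ c) (hA : I.A c) (hB : I.B c)
    (hcard : 2 ≤ c.card) :
    ∀ {W W'}, (quotLam I c x₀ hx₀ hA hB).Reach W W' →
    ∀ {Z}, I.Planar Z → kmap c x₀ Z = W →
    ∃ Z', I.Planar Z' ∧ I.Reach Z Z' ∧ kmap c x₀ Z' = W' := by
  intro W W' h
  induction h with
  | refl => exact fun hZ hk => ⟨_, hZ, Relation.ReflTransGen.refl, hk⟩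
  | @tail b c' hab step ih =>
    intro Z hZ hk
    obtain ⟨Z₁, hZ₁, hreach, hk₁⟩ := ih hZ hk
    obtain ⟨hPc', s, hsA, hsB, hscard, hflip⟩ := step
    obtain ⟨d, hdA, hdB, hdcard, hds, hdc⟩ := quot_common I hx₀ hA hB hcard hsA hsB hscard
    obtain ⟨l, m, r, hdec, hm⟩ := hZ₁.2.2.1 d hdA
    have hflipd : FlipBlock d Z₁ (l ++ m.reverse ++ r) := ⟨l, m, r, hdec, hm, rfl⟩
    have hplanar2 : I.Planar (l ++ m.reverse ++ r) := Lam.flip_planar hZ₁ hdA hdB hflipd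
    have hkflip : FlipBlock s (kmap c x₀ Z₁) (kmap c x₀ (l ++ m.reverse ++ r)) := by
      rw [hds]; exact kmap_flip hx₀ hflipd hdc
    rw [hk₁] at hkflip
    have hkeq : kmap c x₀ (l ++ m.reverse ++ r) = c' :=
      flipBlock_eq (hk₁ ▸ kmap_nodup hZ₁.1) (Finset.card_pos.1 (by omega)) hkflip hflip
    exact ⟨l ++ m.reverse ++ r, hplanar2,
      hreach.tail ⟨hplanar2, d, hdA, hdB, hdcard, hflipd⟩, hkeq⟩

lemma lift_inside (I : Lam) (hA : I.A c) (hB : I.B c) {l r : List ℕ} :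
    ∀ {m m'}, (insideLam I c hA hB).Reach m m' → I.Planar (l ++ m ++ r) →
      I.Planar (l ++ m' ++ r) ∧ I.Reach (l ++ m ++ r) (l ++ m' ++ r) := by
  intro m m' h
  induction h with
  | refl => exact fun hP => ⟨hP, Relation.ReflTransGen.refl⟩
  | @tail b bn hab step ih =>
    intro hP
    obtain ⟨hP1, hreach⟩ := ih hP
    obtain ⟨hPb, d, hdA, hdB, hdcard, hflip⟩ := step
    obtain ⟨u, w, v, hdec, hw, hres⟩ := hflip
    have hflip2 : FlipBlock d (l ++ b ++ r) (l ++ bn ++ r) := by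
      refine ⟨l ++ u, w, v ++ r, ?_, hw, ?_⟩
      · rw [hdec]; simp [List.append_assoc]
      · rw [hres]; simp [List.append_assoc]
    have hplanar2 : I.Planar (l ++ bn ++ r) := Lam.flip_planar hP1 hdA.1 hdB.1 hflip2
    exact ⟨hplanar2, hreach.tail ⟨hplanar2, d, hdA.1, hdB.1, hdcard, hflip2⟩⟩

/-- The main abstract theorem: any two planar layouts of a planar instance are
connected under flips at common clades. -/
theorem lam_main : ∀ (n : ℕ) (I : Lam), I.V.card ≤ n →
    ∀ X X', I.Planar X → I.Planar X' → I.Reach X X' := by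
  intro n
  induction n with
  | zero =>
    intro I hI X X' hX hX'
    have hV : I.V = ∅ := Finset.card_eq_zero.1 (by omega)
    have h1 : X = [] := List.eq_nil_iff_forall_not_mem.2 (fun a ha => by
      have := (hX.2.1 a).1 ha; rw [hV] at this; simp at this)
    have h2 : X' = [] := List.eq_nil_iff_forall_not_mem.2 (fun a ha => by
      have := (hX'.2.1 a).1 ha; rw [hV] at this; simp at this)
    rw [h1, h2]
    exact Relation.ReflTransGen.refl
  | succ n ih =>
    intro I hI X X' hX hX'
    by_cases h1 : I.V.card ≤ 1
    · have heq : X = X' := by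
        refine eq_of_order hX.1 hX'.1 (fun a => (hX.2.1 a).trans (hX'.2.1 a).symm) ?_
        intro a b ha hb hlt
        have : a = b := Finset.card_le_one.1 h1 a ((hX.2.1 a).1 ha) b ((hX.2.1 b).1 hb)
        subst this
        exact absurd hlt (lt_irrefl _)
      rw [heq]
      exact Relation.ReflTransGen.refl
    · push_neg at h1
      by_cases hred : ∃ d, I.A d ∧ I.B d ∧ 2 ≤ d.card ∧ d ≠ I.V
      · obtain ⟨d, hdA, hdB, hdcard, hdne⟩ := hred
        have hdnonempty : d.Nonempty := I.neA d hdA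
        set x₀ := d.min' hdnonempty with hx₀def
        have hx₀ : x₀ ∈ d := Finset.min'_mem _ _
        have hdsubV : d ⊆ I.V := I.subA d hdA
        have hdss : d ⊂ I.V := Finset.ssubset_iff_subset_ne.2 ⟨hdsubV, hdne⟩
        have hJcard : (quotLam I d x₀ hx₀ hdA hdB).V.card ≤ n := by
          have h2 : (insert x₀ (I.V \ d)).card = (I.V \ d).card + 1 :=
            Finset.card_insert_of_notMem (by simp [hx₀])
          have h3 : (I.V \ d).card = I.V.card - d.card := Finset.card_sdiff_of_subset hdsubV
          have h4 : d.card ≤ I.V.card := Finset.card_le_card hdsubV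
          show (insert x₀ (I.V \ d)).card ≤ n
          omega
        have hKcard : (insideLam I d hdA hdB).V.card ≤ n := by
          have := Finset.card_lt_card hdss
          show d.card ≤ n
          omega
        have hqX := quot_planar I hx₀ hdA hdB hX
        have hqX' := quot_planar I hx₀ hdA hdB hX'
        have hreachq := ih (quotLam I d x₀ hx₀ hdA hdB) hJcard _ _ hqX hqX'
        obtain ⟨Z, hZ, hXZ, hkZ⟩ := lift_quot I hx₀ hdA hdB hdcard hreachq hX rfl
        obtain ⟨u, w, v, hdecZ, hw⟩ := hZ.2.2.1 d hdA
        obtain ⟨l', m', r', hdecX', hm'⟩ := hX'.2.2.1 d hdA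
        have hkZ2 : kmap d x₀ Z = u ++ [x₀] ++ v := kmap_block hx₀ hZ.1 hdecZ hw
        have hkX'2 : kmap d x₀ X' = l' ++ [x₀] ++ r' := kmap_block hx₀ hX'.1 hdecX' hm'
        have hx₀u : x₀ ∉ u := fun hc => (nodup_parts (hdecZ ▸ hZ.1)).1 _ hc ((hw x₀).2 hx₀)
        have hx₀l' : x₀ ∉ l' := fun hc => (nodup_parts (hdecX' ▸ hX'.1)).1 _ hc ((hm' x₀).2 hx₀)
        have heq2 : u ++ x₀ :: v = l' ++ x₀ :: r' := by
          have := (hkZ2.symm.trans hkZ).trans hkX'2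
          simpa using this
        obtain ⟨hu, hv⟩ := eq_of_append_singleton heq2 hx₀u hx₀l'
        have hKw := inside_planar I hdA hdB hZ hdecZ hw
        have hKm' := inside_planar I hdA hdB hX' hdecX' hm'
        have hreachk := ih (insideLam I d hdA hdB) hKcard w m' hKw hKm'
        have hZdec2 : Z = l' ++ w ++ r' := by rw [hdecZ, hu, hv]
        obtain ⟨hplanarfin, hfinal⟩ := lift_inside I hdA hdB hreachk (hZdec2 ▸ hZ)
        rw [hZdec2] at hXZ
        rw [hdecX']
        exact hXZ.trans hfinal
      · push_neg at hred
        have Irr : ∀ c, I.A c → I.B c → 2 ≤ c.card → c = I.V := hred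
        have hVne : I.V.Nonempty := Finset.card_pos.1 (by omega)
        rcases rigid I Irr hX hX' hVne with rfl | rfl
        · exact Relation.ReflTransGen.refl
        · refine Relation.ReflTransGen.single ⟨Lam.planar_reverse hX, I.V, I.rootA, I.rootB, h1, ?_⟩
          exact ⟨[], X, [], by simp, fun a => hX.2.1 a, by simp⟩

end Quot

end TGaux


section Bridge

open TGaux

namespace BTree

lemma leafList_ne_nil (t : BTree) : t.leafList ≠ [] := by
  induction t with
  | leaf i => simp [leafList]
  | node l r ihl ihr => simp [leafList, ihl]

lemma mem_leaves {t : BTree} {a : ℕ} : a ∈ t.leaves ↔ a ∈ t.leafList := by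
  simp [leaves]

lemma leaves_node (l r : BTree) : (BTree.node l r).leaves = l.leaves ∪ r.leaves := by
  simp [leaves, leafList]

lemma leaves_nonempty (t : BTree) : t.leaves.Nonempty := by
  obtain ⟨a, ha⟩ := List.exists_mem_of_ne_nil _ (leafList_ne_nil t)
  exact ⟨a, mem_leaves.2 ha⟩

lemma clade_subset : ∀ (t : BTree) (s : Finset ℕ), t.Clade s → s ⊆ t.leaves := by
  intro t
  induction t with
  | leaf i => intro s hs; rw [hs]; intro a ha; simpa [leaves, leafList] using ha
  | node l r ihl ihr =>
    intro s hs
    rcases hs with rfl | hs | hs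
    · exact subset_rfl
    · exact (ihl s hs).trans (by rw [leaves_node]; exact Finset.subset_union_left)
    · exact (ihr s hs).trans (by rw [leaves_node]; exact Finset.subset_union_right)

lemma clade_nonempty : ∀ (t : BTree) (s : Finset ℕ), t.Clade s → s.Nonempty := by
  intro t
  induction t with
  | leaf i => intro s hs; rw [hs]; simp
  | node l r ihl ihr =>
    intro s hs
    rcases hs with rfl | hs | hs
    · exact leaves_nonempty _
    · exact ihl s hs
    · exact ihr s hs

lemma clade_self : ∀ (t : BTree), t.Clade t.leaves := by
  intro t
  cases t with
  | leaf i => simp [Clade, leaves, leafList]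
  | node l r => exact Or.inl rfl

lemma nodup_sub {l r : BTree} (h : (BTree.node l r).leafList.Nodup) :
    l.leafList.Nodup ∧ r.leafList.Nodup ∧ Disjoint l.leaves r.leaves := by
  rw [leafList, List.nodup_append] at h
  refine ⟨h.1, h.2.1, Finset.disjoint_left.2 ?_⟩
  intro a ha hb
  exact h.2.2 a (mem_leaves.1 ha) a (mem_leaves.1 hb) rfl

lemma leaves_card (t : BTree) (h : t.leafList.Nodup) : t.leaves.card = t.leafList.length :=
  List.toFinset_card_of_nodup h

lemma clade_split : ∀ (t : BTree), t.leafList.Nodup → ∀ s, t.Clade s → 2 ≤ s.card →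
    ∃ s₁ s₂, t.Clade s₁ ∧ t.Clade s₂ ∧ Disjoint s₁ s₂ ∧ s₁ ∪ s₂ = s ∧
      s₁.Nonempty ∧ s₂.Nonempty := by
  intro t
  induction t with
  | leaf i =>
    intro _ s hs hcard
    rw [hs] at hcard
    simp at hcard
  | node l r ihl ihr =>
    intro hnd s hs hcard
    obtain ⟨hndl, hndr, hdisj⟩ := nodup_sub hnd
    rcases hs with rfl | hs | hs
    · exact ⟨l.leaves, r.leaves, Or.inr (Or.inl (clade_self l)), Or.inr (Or.inr (clade_self r)),
        hdisj, (leaves_node l r).symm, leaves_nonempty l, leaves_nonempty r⟩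
    · obtain ⟨s₁, s₂, h1, h2, h3, h4, h5, h6⟩ := ihl hndl s hs hcard
      exact ⟨s₁, s₂, Or.inr (Or.inl h1), Or.inr (Or.inl h2), h3, h4, h5, h6⟩
    · obtain ⟨s₁, s₂, h1, h2, h3, h4, h5, h6⟩ := ihr hndr s hs hcard
      exact ⟨s₁, s₂, Or.inr (Or.inr h1), Or.inr (Or.inr h2), h3, h4, h5, h6⟩

lemma clade_laminar : ∀ (t : BTree), t.leafList.Nodup → ∀ s₁ s₂, t.Clade s₁ → t.Clade s₂ →
    s₁ ⊆ s₂ ∨ s₂ ⊆ s₁ ∨ Disjoint s₁ s₂ := by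
  intro t
  induction t with
  | leaf i =>
    intro _ s₁ s₂ h1 h2
    rw [h1, h2]
    exact Or.inl subset_rfl
  | node l r ihl ihr =>
    intro hnd s₁ s₂ h1 h2
    obtain ⟨hndl, hndr, hdisj⟩ := nodup_sub hnd
    rcases h1 with rfl | h1 | h1
    · exact Or.inr (Or.inl (clade_subset _ _ h2))
    · rcases h2 with rfl | h2 | h2
      · exact Or.inl (clade_subset _ _ (Or.inr (Or.inl h1)))
      · exact ihl hndl s₁ s₂ h1 h2
      · exact Or.inr (Or.inr (Finset.disjoint_left.2 (fun a ha hb =>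
          Finset.disjoint_left.1 hdisj (clade_subset _ _ h1 ha) (clade_subset _ _ h2 hb))))
    · rcases h2 with rfl | h2 | h2
      · exact Or.inl (clade_subset _ _ (Or.inr (Or.inr h1)))
      · exact Or.inr (Or.inr (Finset.disjoint_left.2 (fun a ha hb =>
          Finset.disjoint_left.1 hdisj (clade_subset _ _ h2 hb) (clade_subset _ _ h1 ha))))
      · exact ihr hndr s₁ s₂ h1 h2

lemma internal_iff : ∀ (t : BTree), t.leafList.Nodup →
    ∀ s, (t.InternalClade s ↔ t.Clade s ∧ 2 ≤ s.card) := by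
  intro t
  induction t with
  | leaf i =>
    intro _ s
    constructor
    · intro h; exact absurd h (by simp [InternalClade])
    · rintro ⟨h1, h2⟩
      rw [Clade] at h1
      rw [h1] at h2
      simp at h2
  | node l r ihl ihr =>
    intro hnd s
    obtain ⟨hndl, hndr, _⟩ := nodup_sub hnd
    constructor
    · rintro (rfl | h | h)
      · refine ⟨Or.inl rfl, ?_⟩
        rw [leaves_card _ hnd]
        rw [leafList, List.length_append]
        have h1 : 1 ≤ l.leafList.length := List.length_pos_iff.2 (leafList_ne_nil l)
        have h2 : 1 ≤ r.leafList.length := List.length_pos_iff.2 (leafList_ne_nil r)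
        omega
      · obtain ⟨h1, h2⟩ := (ihl hndl s).1 h
        exact ⟨Or.inr (Or.inl h1), h2⟩
      · obtain ⟨h1, h2⟩ := (ihr hndr s).1 h
        exact ⟨Or.inr (Or.inr h1), h2⟩
    · rintro ⟨rfl | h | h, hcard⟩
      · exact Or.inl rfl
      · exact Or.inr (Or.inl ((ihl hndl s).2 ⟨h, hcard⟩))
      · exact Or.inr (Or.inr ((ihr hndr s).2 ⟨h, hcard⟩))

end BTree

variable {n : ℕ} (G : Tanglegram n)

lemma phi_lt {i : ℕ} (hi : i < n) : G.φ i < n := by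
  by_contra h
  push_neg at h
  have h1 : G.φ (G.φ i) = G.φ i := G.hφ _ h
  have := G.φ.injective h1
  omega

lemma phi_lt_iff {i : ℕ} : G.φ i < n ↔ i < n := by
  constructor
  · intro h
    by_contra h'
    push_neg at h'
    rw [G.hφ i h'] at h
    omega
  · exact phi_lt G

lemma leaves_T : G.T.leaves = Finset.range n := by
  ext a
  rw [BTree.mem_leaves, Finset.mem_range]
  exact G.hT.2 a

lemma leaves_S : G.S.leaves = Finset.range n := by
  ext a
  rw [BTree.mem_leaves, Finset.mem_range]
  exact G.hS.2 a

lemma image_phi_preimage (s : Finset ℕ) : (s.image ⇑G.φ.symm).image ⇑G.φ = s := by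
  rw [Finset.image_image]
  simp

/-- The abstract instance associated with a tanglegram. -/
def tangLam : TGaux.Lam where
  V := Finset.range n
  A := fun s => G.T.Clade s
  B := fun s => G.S.Clade (s.image G.φ)
  rootA := by rw [← leaves_T]; exact BTree.clade_self _
  rootB := by
    show G.S.Clade ((Finset.range n).image ⇑G.φ)
    have himg : (Finset.range n).image ⇑G.φ = Finset.range n := by
      apply Finset.eq_of_subset_of_card_le
      · intro a ha
        obtain ⟨b, hb, rfl⟩ := Finset.mem_image.1 ha
        exact Finset.mem_range.2 (phi_lt G (Finset.mem_range.1 hb))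
      · rw [Finset.card_image_of_injective _ G.φ.injective]
    rw [himg, ← leaves_S]
    exact BTree.clade_self _
  subA := fun s hs => (BTree.clade_subset _ _ hs).trans (by rw [leaves_T])
  subB := by
    intro s hs a ha
    have h1 : G.φ a ∈ s.image ⇑G.φ := Finset.mem_image_of_mem _ ha
    have h2 := (BTree.clade_subset _ _ hs).trans (by rw [leaves_S] : G.S.leaves ⊆ Finset.range n) h1
    exact Finset.mem_range.2 ((phi_lt_iff G).1 (Finset.mem_range.1 h2))
  neA := fun s hs => BTree.clade_nonempty _ _ hs
  neB := fun s hs => Finset.image_nonempty.1 (BTree.clade_nonempty _ _ hs)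
  splitA := fun s hs hcard => BTree.clade_split _ G.hT.1 s hs hcard
  splitB := by
    intro s hs hcard
    have hcard' : 2 ≤ (s.image ⇑G.φ).card := by
      rwa [Finset.card_image_of_injective _ G.φ.injective]
    obtain ⟨d₁, d₂, h1, h2, h3, h4, h5, h6⟩ := BTree.clade_split _ G.hS.1 _ hs hcard'
    refine ⟨d₁.image ⇑G.φ.symm, d₂.image ⇑G.φ.symm, ?_, ?_, ?_, ?_, ?_, ?_⟩
    · show G.S.Clade ((d₁.image ⇑G.φ.symm).image ⇑G.φ)
      rwa [image_phi_preimage]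
    · show G.S.Clade ((d₂.image ⇑G.φ.symm).image ⇑G.φ)
      rwa [image_phi_preimage]
    · exact (Finset.disjoint_image G.φ.symm.injective).2 h3
    · apply Finset.image_injective G.φ.injective
      rw [Finset.image_union, image_phi_preimage, image_phi_preimage, h4]
    · exact h5.image _
    · exact h6.image _
  lamA := fun s₁ s₂ h1 h2 => BTree.clade_laminar _ G.hT.1 s₁ s₂ h1 h2
  lamB := by
    intro s₁ s₂ h1 h2
    rcases BTree.clade_laminar _ G.hS.1 _ _ h1 h2 with h | h | h
    · exact Or.inl ((Finset.image_subset_image_iff G.φ.injective).1 h)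
    · exact Or.inr (Or.inl ((Finset.image_subset_image_iff G.φ.injective).1 h))
    · exact Or.inr (Or.inr ((Finset.disjoint_image G.φ.injective).1 h))

lemma consecIn_map_rev {X : List ℕ} {s : Finset ℕ} {f : ℕ → ℕ} (hf : Function.Injective f)
    (h : ConsecIn (X.map f) (s.image f)) : ConsecIn X s := by
  obtain ⟨l, m, r, hdec, hm⟩ := h
  rw [List.append_assoc, List.map_eq_append_iff] at hdec
  obtain ⟨l₀, mr₀, rfl, hl, hmr⟩ := hdec
  rw [List.map_eq_append_iff] at hmr
  obtain ⟨m₀, r₀, rfl, hm0, hr0⟩ := hmr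
  refine ⟨l₀, m₀, r₀, by rw [List.append_assoc], fun a => ?_⟩
  constructor
  · intro ha
    have : f a ∈ m := hm0 ▸ List.mem_map_of_mem (f := f) ha
    obtain ⟨b, hb, hba⟩ := Finset.mem_image.1 ((hm (f a)).1 this)
    rwa [← hf hba]
  · intro ha
    have : f a ∈ m := (hm (f a)).2 (Finset.mem_image_of_mem f ha)
    rw [← hm0] at this
    obtain ⟨b, hb, hba⟩ := List.mem_map.1 this
    rwa [← hf hba]

lemma planar_of_layout {X Y : List ℕ} (h : IsPlanarLayout G X Y) :
    (tangLam G).Planar X ∧ Y = X.map ⇑G.φ := by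
  obtain ⟨⟨hXp, hYp, hconsT, hconsS⟩, hnc⟩ := h
  have hXnd : X.Nodup := hXp.nodup_iff.2 G.hT.1
  have hYnd : Y.Nodup := hYp.nodup_iff.2 G.hS.1
  have hXmem : ∀ a, a ∈ X ↔ a ∈ Finset.range n := fun a => by
    rw [hXp.mem_iff, G.hT.2 a, Finset.mem_range]
  have hYmem : ∀ a, a ∈ Y ↔ a ∈ Finset.range n := fun a => by
    rw [hYp.mem_iff, G.hS.2 a, Finset.mem_range]
  have hmapmem : ∀ a, a ∈ X.map ⇑G.φ ↔ a ∈ Y := by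
    intro a
    rw [hYmem a, List.mem_map]
    constructor
    · rintro ⟨b, hb, rfl⟩
      exact Finset.mem_range.2 (phi_lt G (Finset.mem_range.1 ((hXmem b).1 hb)))
    · intro ha
      refine ⟨G.φ.symm a, ?_, by simp⟩
      rw [hXmem, Finset.mem_range]
      rw [← phi_lt_iff G]
      simpa using Finset.mem_range.1 ha
  have hYeq : Y = X.map ⇑G.φ := by
    refine (TGaux.eq_of_order (hXnd.map G.φ.injective) hYnd
      (fun a => (hmapmem a)) ?_).symm
    intro a b ha hb hlt
    obtain ⟨i, hi, rfl⟩ := List.mem_map.1 ha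
    obtain ⟨j, hj, rfl⟩ := List.mem_map.1 hb
    rw [TGaux.indexOf_map G.φ.injective, TGaux.indexOf_map G.φ.injective] at hlt
    have hij : i ≠ j := fun h => by subst h; exact lt_irrefl _ hlt
    have hnij := hnc i j
    rw [Crossing] at hnij
    push_neg at hnij
    have h1 := hnij (Finset.mem_range.1 ((hXmem i).1 hi)) (Finset.mem_range.1 ((hXmem j).1 hj)) hlt
    have h2 : Y.idxOf (G.φ i) ≠ Y.idxOf (G.φ j) := by
      intro hc
      exact hij (G.φ.injective (TGaux.indexOf_inj hYnd ((hmapmem _).1 ha) ((hmapmem _).1 hb) hc))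
    omega
  refine ⟨⟨hXnd, hXmem, fun c hc => hconsT c hc, ?_⟩, hYeq⟩
  intro c hc
  refine consecIn_map_rev G.φ.injective ?_
  rw [← hYeq]
  exact hconsS _ hc

lemma layout_of_planar {X : List ℕ} (h : (tangLam G).Planar X) :
    IsPlanarLayout G X (X.map ⇑G.φ) := by
  obtain ⟨hnd, hmem, hconsA, hconsB⟩ := h
  have hmem' : ∀ a, a ∈ X ↔ a ∈ Finset.range n := hmem
  have hmapnd : (X.map ⇑G.φ).Nodup := hnd.map G.φ.injective
  have hmapmem : ∀ a, a ∈ X.map ⇑G.φ ↔ a ∈ G.S.leafList := by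
    intro a
    rw [G.hS.2 a, List.mem_map]
    constructor
    · rintro ⟨b, hb, rfl⟩
      exact phi_lt G (Finset.mem_range.1 ((hmem' b).1 hb))
    · intro ha
      refine ⟨G.φ.symm a, ?_, by simp⟩
      rw [hmem' _, Finset.mem_range, ← phi_lt_iff G]
      simpa using ha
  refine ⟨⟨?_, ?_, fun c hc => hconsA c hc, ?_⟩, ?_⟩
  · rw [List.perm_ext_iff_of_nodup hnd G.hT.1]
    intro a
    rw [hmem' a, Finset.mem_range, G.hT.2 a]
  · rw [List.perm_ext_iff_of_nodup hmapnd G.hS.1]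
    exact hmapmem
  · intro s hs
    have h1 : (tangLam G).B (s.image ⇑G.φ.symm) := by
      show G.S.Clade _
      rwa [image_phi_preimage]
    have h2 := hconsB _ h1
    have := TGaux.consecIn_map (f := ⇑G.φ) h2
    rwa [image_phi_preimage] at this
  · intro i j hc
    obtain ⟨hi, hj, h1, h2⟩ := hc
    have e1 : (X.map ⇑G.φ).idxOf (G.φ i) = X.idxOf i := TGaux.indexOf_map G.φ.injective i
    have e2 : (X.map ⇑G.φ).idxOf (G.φ j) = X.idxOf j := TGaux.indexOf_map G.φ.injective j
    rw [e1, e2] at h2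
    omega

theorem flipGraph_connected' (hG : IsPlanarTanglegram G) : (flipGraph G).Connected := by
  rw [SimpleGraph.connected_iff]
  obtain ⟨X₀, Y₀, h₀⟩ := hG
  refine ⟨?_, ⟨⟨(X₀, Y₀), h₀⟩⟩⟩
  intro p q
  obtain ⟨⟨X, Y⟩, hp⟩ := p
  obtain ⟨⟨X', Y'⟩, hq⟩ := q
  obtain ⟨hPX, hYeq⟩ := planar_of_layout G hp
  obtain ⟨hPX', hY'eq⟩ := planar_of_layout G hq
  have hreach : (tangLam G).Reach X X' :=
    TGaux.lam_main (tangLam G).V.card (tangLam G) le_rfl X X' hPX hPX'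
  have reach_planar : ∀ {U W : List ℕ}, (tangLam G).Reach U W →
      (tangLam G).Planar U → (tangLam G).Planar W := by
    intro U W h hU
    induction h with
    | refl => exact hU
    | tail _ step _ => exact step.1
  have main : ∀ {W}, (tangLam G).Reach X W →
      ∀ (hL : IsPlanarLayout G W (W.map ⇑G.φ)),
      (flipGraph G).Reachable ⟨(X, Y), hp⟩ ⟨(W, W.map ⇑G.φ), hL⟩ := by
    intro W h
    induction h with
    | refl =>
      intro hL
      have hpq : (⟨(X, Y), hp⟩ : {p : List ℕ × List ℕ // IsPlanarLayout G p.1 p.2}) =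
          ⟨(X, X.map ⇑G.φ), hL⟩ := Subtype.ext (Prod.ext rfl hYeq)
      rw [hpq]
    | @tail b c' hab step ih =>
      intro hL
      have hPb : (tangLam G).Planar b := reach_planar hab hPX
      have hLb : IsPlanarLayout G b (b.map ⇑G.φ) := layout_of_planar G hPb
      have hr := ih hLb
      obtain ⟨hPc', cset, hcA, hcB, hccard, hflip⟩ := step
      by_cases hv : (⟨(b, b.map ⇑G.φ), hLb⟩ : {p : List ℕ × List ℕ // IsPlanarLayout G p.1 p.2}) =
          ⟨(c', c'.map ⇑G.φ), hL⟩
      · rw [← hv]; exact hr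
      · refine hr.trans (SimpleGraph.Adj.reachable ?_)
        refine ⟨hv, Or.inl ?_⟩
        refine ⟨cset, cset.image ⇑G.φ, ?_, hflip, TGaux.flipBlock_map hflip⟩
        refine ⟨(BTree.internal_iff _ G.hT.1 cset).2 ⟨hcA, hccard⟩, ?_, rfl⟩
        exact (BTree.internal_iff _ G.hS.1 (cset.image ⇑G.φ)).2
          ⟨hcB, by rwa [Finset.card_image_of_injective _ G.φ.injective]⟩
  have hq2 : (⟨(X', Y'), hq⟩ : {p : List ℕ × List ℕ // IsPlanarLayout G p.1 p.2}) =
      ⟨(X', X'.map ⇑G.φ), layout_of_planar G hPX'⟩ := Subtype.ext (Prod.ext rfl hY'eq)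
  rw [hq2]
  exact main hreach _

end Bridge

/-- For any planar tanglegram, the flip graph is connected. -/
theorem flipGraph_connected {n : ℕ} (G : Tanglegram n) (hG : IsPlanarTanglegram G) :
    (flipGraph G).Connected :=
  flipGraph_connected' G hG
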